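/- arXiv:2402.08433 — 6 statements merged into one kernel-verified Lean document; each statement's English description precedes it below -/
import Mathlib

section
/- Let k ≥ 2 and let G = (V,E) be a simple graph with vertex set V = {1,…,k}. Then the two Euler products ∏_p ( Σ_{m=0}^{k} i_m(G) p^{−m} (1 − 1/p)^{k−m} ) and ∏_p ( Σ_{F ⊆ E} (−1)^{|F|} p^{−v(F)} ), both taken over all primes p, are equal (both represent the asymptotic density A_G of k-tuples satisfying gcd(n_i,n_j) = 1 for all edges {i,j} ∈ E). -/
open Finset

lemma sum_neg_one_pow {α : Type*} [DecidableEq α] (s : Finset α) :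
    ∑ t ∈ s.powerset, (-1 : ℝ) ^ t.card = if s = ∅ then 1 else 0 := by
  have h := Finset.prod_add (fun _ : α => (-1 : ℝ)) (fun _ => 1) s
  simp only [prod_const, prod_const_one, mul_one, one_pow, neg_add_cancel] at h
  rw [← h]
  rcases eq_or_ne s ∅ with hs | hs
  · simp [hs]
  · rw [if_neg hs]
    simp [Finset.card_eq_zero, hs, zero_pow]

lemma innerSumAG {k : ℕ} (B : Finset (Fin k)) (x : ℝ) :
    ∑ S ∈ Finset.univ.powerset.filter (fun S => B ⊆ S),
      x ^ S.card * (1 - x) ^ (k - S.card) = x ^ B.card := by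
  have hbij : ∑ S ∈ Finset.univ.powerset.filter (fun S => B ⊆ S),
      x ^ S.card * (1 - x) ^ (k - S.card)
      = ∑ T ∈ (Finset.univ \ B).powerset,
          x ^ (B ∪ T).card * (1 - x) ^ (k - (B ∪ T).card) := by
    refine Finset.sum_bij' (fun S _ => S \ B) (fun T _ => B ∪ T) ?_ ?_ ?_ ?_ ?_
    · intro S hS
      simp only [mem_filter, mem_powerset] at hS
      rw [mem_powerset]
      exact Finset.sdiff_subset_sdiff (Finset.subset_univ _) le_rfl
    · intro T hT
      simp only [mem_powerset] at hT
      simp only [mem_filter, mem_powerset]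
      exact ⟨Finset.subset_univ _, Finset.subset_union_left⟩
    · intro S hS
      simp only [mem_filter, mem_powerset] at hS
      exact Finset.union_sdiff_of_subset hS.2
    · intro T hT
      simp only [mem_powerset] at hT
      refine Finset.union_sdiff_cancel_left ?_
      exact Finset.disjoint_left.2 fun a haB haT => (Finset.mem_sdiff.1 (hT haT)).2 haB
    · intro S hS
      simp only [mem_filter, mem_powerset] at hS
      rw [Finset.union_sdiff_of_subset hS.2]
  rw [hbij]
  have hdisj : ∀ T ∈ (Finset.univ \ B).powerset, Disjoint B T := fun T hT =>
    Finset.disjoint_left.2 fun a haB haT =>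
      (Finset.mem_sdiff.1 (Finset.mem_powerset.1 hT haT)).2 haB
  have hcardU : (Finset.univ \ B : Finset (Fin k)).card = k - B.card := by
    rw [Finset.card_sdiff_of_subset (Finset.subset_univ _)]
    simp
  have h2 : ∀ T ∈ (Finset.univ \ B).powerset,
      x ^ (B ∪ T).card * (1 - x) ^ (k - (B ∪ T).card)
        = x ^ B.card * (x ^ T.card * (1 - x) ^ ((Finset.univ \ B) \ T).card) := by
    intro T hT
    rw [Finset.card_union_of_disjoint (hdisj T hT), pow_add, mul_assoc]
    congr 2
    rw [Finset.card_sdiff_of_subset (Finset.mem_powerset.1 hT), hcardU]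
    have hB : B.card ≤ k := by simpa using Finset.card_le_univ B
    have hT' : T.card ≤ k - B.card := hcardU ▸ Finset.card_le_card (Finset.mem_powerset.1 hT)
    congr 1
    omega
  rw [Finset.sum_congr rfl h2, ← Finset.mul_sum]
  have h3 := Finset.prod_add (fun _ : Fin k => x) (fun _ => 1 - x) (Finset.univ \ B)
  simp only [prod_const, add_sub_cancel, one_pow] at h3
  rw [← h3, mul_one]

lemma keyAG (k : ℕ) (G : SimpleGraph (Fin k)) [DecidableRel G.Adj] (x : ℝ) :
    ∑ S ∈ Finset.univ.filter (fun S : Finset (Fin k) => ∀ i ∈ S, ∀ j ∈ S, ¬ G.Adj i j),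
      x ^ S.card * (1 - x) ^ (k - S.card)
    = ∑ F ∈ G.edgeFinset.powerset, (-1 : ℝ) ^ F.card *
        x ^ (Finset.univ.filter fun v : Fin k => ∃ e ∈ F, v ∈ e).card := by
  classical
  have hind : ∀ S : Finset (Fin k),
      (∀ i ∈ S, ∀ j ∈ S, ¬ G.Adj i j) ↔
        G.edgeFinset.filter (fun e => ∀ v ∈ e, v ∈ S) = ∅ := by
    intro S
    rw [Finset.filter_eq_empty_iff]
    simp only [SimpleGraph.mem_edgeFinset, Sym2.forall, SimpleGraph.mem_edgeSet,
      Sym2.mem_iff, forall_eq_or_imp, forall_eq]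
    constructor
    · intro h i j hadj hij
      exact h i hij.1 j hij.2 hadj
    · intro h i hi j hj hadj
      exact h i j hadj ⟨hi, hj⟩
  have hpow : ∀ S : Finset (Fin k),
      (G.edgeFinset.filter fun e => ∀ v ∈ e, v ∈ S).powerset
        = G.edgeFinset.powerset.filter (fun F => ∀ e ∈ F, ∀ v ∈ e, v ∈ S) := by
    intro S
    ext F
    simp only [Finset.mem_powerset, Finset.mem_filter, Finset.subset_iff,
      SimpleGraph.mem_edgeFinset]
    constructor
    · intro h
      exact ⟨fun e he => (h he).1, fun e he v hv => (h he).2 v hv⟩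
    · intro h e he
      exact ⟨h.1 he, h.2 _ he⟩
  have step1 : ∀ S : Finset (Fin k),
      (if (∀ i ∈ S, ∀ j ∈ S, ¬ G.Adj i j) then x ^ S.card * (1 - x) ^ (k - S.card) else 0)
      = ∑ F ∈ G.edgeFinset.powerset,
          (if ∀ e ∈ F, ∀ v ∈ e, v ∈ S then
            (-1:ℝ) ^ F.card * (x ^ S.card * (1 - x) ^ (k - S.card)) else 0) := by
    intro S
    rw [← Finset.sum_filter, ← hpow S, ← Finset.sum_mul, sum_neg_one_pow]
    simp only [hind S, ite_mul, one_mul, zero_mul]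
  rw [Finset.sum_filter, Finset.sum_congr rfl (fun S _ => step1 S), Finset.sum_comm]
  refine Finset.sum_congr rfl fun F hF => ?_
  rw [← Finset.sum_filter, ← Finset.mul_sum]
  congr 1
  have hset : Finset.univ.filter (fun S : Finset (Fin k) => ∀ e ∈ F, ∀ v ∈ e, v ∈ S)
      = Finset.univ.powerset.filter
          (fun S => (Finset.univ.filter fun v : Fin k => ∃ e ∈ F, v ∈ e) ⊆ S) := by
    ext S
    simp only [Finset.mem_filter, Finset.mem_univ, Finset.mem_powerset, true_and,
      Finset.subset_univ, Finset.subset_iff]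
    aesop
  rw [hset, innerSumAG]



/-- The two Euler-product expressions for the density `A_G`: one in terms of
the numbers `i_m(G)` of independent sets of size `m`, the other as
`∏_p Σ_{F ⊆ E} (-1)^{|F|} p^{-v(F)}`. -/
theorem stmt_1 (k : ℕ) (hk : 2 ≤ k) (G : SimpleGraph (Fin k)) [DecidableRel G.Adj] :
    (∏' p : Nat.Primes, ∑ m ∈ Finset.range (k + 1),
        ((Finset.univ.filter fun S : Finset (Fin k) =>
            S.card = m ∧ ∀ i ∈ S, ∀ j ∈ S, ¬ G.Adj i j).card : ℝ) /
          ((p : ℕ) : ℝ) ^ m * (1 - 1 / ((p : ℕ) : ℝ)) ^ (k - m)) =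
    ∏' p : Nat.Primes, ∑ F ∈ G.edgeFinset.powerset,
        (-1 : ℝ) ^ F.card / ((p : ℕ) : ℝ) ^ {v : Fin k | ∃ e ∈ F, v ∈ e}.ncard := by
  classical
  refine tprod_congr fun p => ?_
  set x : ℝ := 1 / ((p : ℕ) : ℝ) with hx
  have hncard : ∀ F : Finset (Sym2 (Fin k)),
      {v : Fin k | ∃ e ∈ F, v ∈ e}.ncard
        = (Finset.univ.filter fun v : Fin k => ∃ e ∈ F, v ∈ e).card := by
    intro F
    rw [Set.ncard_eq_toFinset_card', Set.toFinset_setOf]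
  have hfib := Finset.sum_fiberwise_of_maps_to
    (s := Finset.univ.filter (fun S : Finset (Fin k) => ∀ i ∈ S, ∀ j ∈ S, ¬ G.Adj i j))
    (t := Finset.range (k + 1)) (g := Finset.card)
    (fun S _ => by
      rw [Finset.mem_range, Nat.lt_succ_iff]
      simpa using Finset.card_le_univ S)
    (fun S => x ^ S.card * (1 - x) ^ (k - S.card))
  have hLHS : ∑ m ∈ Finset.range (k + 1),
      ((Finset.univ.filter fun S : Finset (Fin k) =>
          S.card = m ∧ ∀ i ∈ S, ∀ j ∈ S, ¬ G.Adj i j).card : ℝ) /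
        ((p : ℕ) : ℝ) ^ m * (1 - 1 / ((p : ℕ) : ℝ)) ^ (k - m)
      = ∑ S ∈ Finset.univ.filter (fun S : Finset (Fin k) => ∀ i ∈ S, ∀ j ∈ S, ¬ G.Adj i j),
          x ^ S.card * (1 - x) ^ (k - S.card) := by
    rw [← hfib]
    refine Finset.sum_congr rfl fun m hm => ?_
    have hfilter : (Finset.univ.filter
          (fun S : Finset (Fin k) => ∀ i ∈ S, ∀ j ∈ S, ¬ G.Adj i j)).filter
            (fun S => S.card = m)
        = Finset.univ.filter fun S : Finset (Fin k) =>
            S.card = m ∧ ∀ i ∈ S, ∀ j ∈ S, ¬ G.Adj i j := by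
      rw [Finset.filter_filter]
      exact Finset.filter_congr fun S _ => by tauto
    rw [← hfilter]
    rw [Finset.sum_congr rfl (fun S hS => by
      rw [(Finset.mem_filter.1 hS).2]), Finset.sum_const, nsmul_eq_mul, hfilter]
    simp only [hx, one_div, div_eq_mul_inv, inv_pow, mul_pow, one_pow, one_mul]
    ring
  rw [hLHS, keyAG]
  refine Finset.sum_congr rfl fun F hF => ?_
  rw [hncard F]
  simp only [hx, one_div, div_eq_mul_inv, inv_pow, one_mul]
end

section
/- Let k ≥ 2, let G = (V,E) be a simple graph with vertex set V = {1,…,k}, and let J ⊆ V be any vertex cover of G (a set of vertices containing at least one endpoint of every edge of G). Then the asymptotic density A_G = ∏_p ( Σ_{F ⊆ E} (−1)^{|F|} p^{−v(F)} ) satisfies A_G = ∏_p ( Σ'_{L ⊆ J} p^{−|L|} (1 − 1/p)^{|J∖L| + |N(L)∖J|} ), where Σ' denotes the sum over those subsets L of J that are independent in G (no two vertices of L are adjacent), and N(L) is the union of the neighbourhoods in G of the vertices of L. -/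
open Finset

lemma binom {α : Type*} [DecidableEq α] (s : Finset α) (x : ℝ) :
    ∑ t ∈ s.powerset, x ^ t.card * (1 - x) ^ (s.card - t.card) = 1 := by
  have h := Finset.prod_add (fun _ : α => x) (fun _ => 1 - x) s
  simp only [add_sub_cancel, Finset.prod_const_one, Finset.prod_const] at h
  calc ∑ t ∈ s.powerset, x ^ t.card * (1 - x) ^ (s.card - t.card)
      = ∑ t ∈ s.powerset, x ^ t.card * (1 - x) ^ (s \ t).card := by
        apply Finset.sum_congr rfl
        intro t ht
        rw [Finset.card_sdiff_of_subset (Finset.mem_powerset.mp ht)]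
    _ = 1 := h.symm

lemma supersets {k : ℕ} (T : Finset (Fin k)) (x : ℝ) :
    ∑ S ∈ Finset.univ.powerset.filter (fun S => T ⊆ S),
      x ^ S.card * (1 - x) ^ (k - S.card) = x ^ T.card := by
  rw [Finset.sum_nbij' (i := fun S => S \ T) (j := fun W => T ∪ W)
      (t := Tᶜ.powerset) (g := fun W => x ^ T.card * (x ^ W.card * (1-x) ^ (Tᶜ.card - W.card)))]
  · rw [← Finset.mul_sum, binom, mul_one]
  · intro S hS
    simp only [Finset.mem_filter, Finset.mem_powerset] at hS ⊢
    intro v hv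
    simp only [Finset.mem_sdiff] at hv
    simp [Finset.mem_compl, hv.2]
  · intro W hW
    simp only [Finset.mem_powerset] at hW
    simp only [Finset.mem_filter, Finset.mem_powerset]
    exact ⟨Finset.subset_univ _, Finset.subset_union_left⟩
  · intro S hS
    simp only [Finset.mem_filter, Finset.mem_powerset] at hS
    rw [Finset.union_sdiff_of_subset hS.2]
  · intro W hW
    simp only [Finset.mem_powerset] at hW
    rw [Finset.union_sdiff_cancel_left]
    rw [Finset.disjoint_left]
    intro v hv hvW
    exact (Finset.mem_compl.mp (hW hvW)) hv
  · intro S hS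
    simp only [Finset.mem_filter, Finset.mem_powerset] at hS
    have h1 : (S \ T).card = S.card - T.card := Finset.card_sdiff_of_subset hS.2
    have h2 : T.card ≤ S.card := Finset.card_le_card hS.2
    have h3 : S.card ≤ k := by
      have := Finset.card_le_univ S
      simpa using this
    have h4 : Tᶜ.card = k - T.card := by simp [Finset.card_compl]
    have e1 : S.card = T.card + (S \ T).card := by omega
    have e2 : Tᶜ.card - (S \ T).card = k - S.card := by omega
    have e3 : k - (T.card + (S \ T).card) = Tᶜ.card - (S \ T).card := by omega
    rw [e1, pow_add, e3]
    ring

lemma neg_one_sum {α : Type*} [DecidableEq α] (s : Finset α) :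
    ∑ m ∈ s.powerset, (-1:ℝ)^m.card = if s = ∅ then 1 else 0 := by
  have h := Finset.sum_powerset_neg_one_pow_card (x := s)
  calc ∑ m ∈ s.powerset, (-1:ℝ)^m.card
      = ((∑ m ∈ s.powerset, (-1:ℤ)^m.card : ℤ) : ℝ) := by push_cast; rfl
    _ = _ := by rw [h]; split <;> simp

lemma claimA {k : ℕ} (G : SimpleGraph (Fin k)) [DecidableRel G.Adj] (x : ℝ) :
    ∑ F ∈ G.edgeFinset.powerset,
      (-1:ℝ)^F.card * x^(Finset.univ.filter (fun v => ∃ e ∈ F, v ∈ e)).card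
    = ∑ S ∈ Finset.univ.powerset.filter
        (fun S => G.edgeFinset.filter (fun e => ∀ v ∈ e, v ∈ S) = ∅),
        x^S.card * (1-x)^(k-S.card) := by
  calc ∑ F ∈ G.edgeFinset.powerset,
      (-1:ℝ)^F.card * x^(Finset.univ.filter (fun v => ∃ e ∈ F, v ∈ e)).card
      = ∑ F ∈ G.edgeFinset.powerset, ∑ S ∈ Finset.univ.powerset,
          (if (Finset.univ.filter (fun v => ∃ e ∈ F, v ∈ e)) ⊆ S then
            (-1:ℝ)^F.card * (x^S.card * (1-x)^(k-S.card)) else 0) := by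
        apply Finset.sum_congr rfl
        intro F _
        rw [← Finset.sum_filter, ← Finset.mul_sum, supersets]
    _ = ∑ S ∈ Finset.univ.powerset, ∑ F ∈ G.edgeFinset.powerset,
          (if (Finset.univ.filter (fun v => ∃ e ∈ F, v ∈ e)) ⊆ S then
            (-1:ℝ)^F.card * (x^S.card * (1-x)^(k-S.card)) else 0) := Finset.sum_comm
    _ = ∑ S ∈ Finset.univ.powerset,
          (if G.edgeFinset.filter (fun e => ∀ v ∈ e, v ∈ S) = ∅ then (1:ℝ) else 0) *
            (x^S.card * (1-x)^(k-S.card)) := by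
        apply Finset.sum_congr rfl
        intro S _
        rw [← Finset.sum_filter]
        have hset : G.edgeFinset.powerset.filter
            (fun F => (Finset.univ.filter (fun v => ∃ e ∈ F, v ∈ e)) ⊆ S)
            = (G.edgeFinset.filter (fun e => ∀ v ∈ e, v ∈ S)).powerset := by
          ext F
          simp only [Finset.mem_filter, Finset.mem_powerset]
          constructor
          · rintro ⟨hFE, hVS⟩ e heF
            refine Finset.mem_filter.mpr ⟨hFE heF, fun v hv => ?_⟩
            exact hVS (Finset.mem_filter.mpr ⟨Finset.mem_univ v, ⟨e, heF, hv⟩⟩)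
          · intro hF
            refine ⟨hF.trans (Finset.filter_subset _ _), fun v hv => ?_⟩
            obtain ⟨e, heF, hve⟩ := (Finset.mem_filter.mp hv).2
            exact (Finset.mem_filter.mp (hF heF)).2 v hve
        rw [hset, ← Finset.sum_mul, neg_one_sum]
    _ = _ := by
        rw [Finset.sum_filter]
        apply Finset.sum_congr rfl
        intro S _
        split <;> simp


lemma okiff {k : ℕ} (G : SimpleGraph (Fin k)) [DecidableRel G.Adj] (S : Finset (Fin k)) :
    (G.edgeFinset.filter (fun e => ∀ v ∈ e, v ∈ S) = ∅) ↔
      ∀ i j, G.Adj i j → i ∉ S ∨ j ∉ S := by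
  rw [Finset.filter_eq_empty_iff]
  constructor
  · intro h i j hadj
    by_contra hc
    push_neg at hc
    have he : s(i,j) ∈ G.edgeFinset := by
      rw [SimpleGraph.mem_edgeFinset, SimpleGraph.mem_edgeSet]; exact hadj
    refine h he ?_
    intro v hv
    rw [Sym2.mem_iff] at hv
    rcases hv with rfl | rfl
    · exact hc.1
    · exact hc.2
  · intro h e he
    induction e using Sym2.ind with
    | _ i j =>
      have hadj : G.Adj i j := by
        rwa [SimpleGraph.mem_edgeFinset, SimpleGraph.mem_edgeSet] at he
      intro hall
      rcases h i j hadj with h' | h'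
      · exact h' (hall i (by simp))
      · exact h' (hall j (by simp))

lemma claimB {k : ℕ} (G : SimpleGraph (Fin k)) [DecidableRel G.Adj]
    (J : Finset (Fin k)) (hJ : ∀ i j, G.Adj i j → i ∈ J ∨ j ∈ J) (x : ℝ) :
    ∑ S ∈ Finset.univ.powerset.filter
        (fun S => G.edgeFinset.filter (fun e => ∀ v ∈ e, v ∈ S) = ∅),
        x^S.card * (1-x)^(k-S.card)
    = ∑ L ∈ J.powerset.filter (fun L => ∀ i ∈ L, ∀ j ∈ L, ¬ G.Adj i j),
        x^L.card * (1-x)^((J \ L).card +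
          ((Finset.univ.filter fun v : Fin k => ∃ u ∈ L, G.Adj u v) \ J).card) := by
  rw [← Finset.sum_fiberwise_of_maps_to (g := fun S => S ∩ J) (t := J.powerset)
      (fun S _ => Finset.mem_powerset.mpr Finset.inter_subset_right), Finset.sum_filter]
  apply Finset.sum_congr rfl
  intro L hL
  have hLJ : L ⊆ J := Finset.mem_powerset.mp hL
  set NL := Finset.univ.filter (fun v : Fin k => ∃ u ∈ L, G.Adj u v) with hNL
  set M := (J ∪ NL)ᶜ with hM
  split
  · rename_i hindep
    -- bijection with M.powerset
    rw [Finset.sum_nbij' (i := fun S => S \ J) (j := fun T => L ∪ T)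
        (t := M.powerset)
        (g := fun T => (x^L.card * (1-x)^((J \ L).card + (NL \ J).card)) *
          (x^T.card * (1-x)^(M.card - T.card)))]
    · rw [← Finset.mul_sum, binom M x, mul_one]
    · -- hi : maps to M.powerset
      intro S hS
      simp only [Finset.mem_filter, Finset.mem_powerset] at hS
      obtain ⟨⟨-, hok⟩, hSJ⟩ := hS
      rw [okiff] at hok
      rw [Finset.mem_powerset]
      intro v hv
      rw [Finset.mem_sdiff] at hv
      rw [hM, Finset.mem_compl, Finset.mem_union]
      push_neg
      refine ⟨hv.2, ?_⟩
      rw [hNL, Finset.mem_filter]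
      push_neg
      intro _ u huL hadj
      have huS : u ∈ S := by
        have h : u ∈ S ∩ J := by rw [hSJ]; exact huL
        exact (Finset.mem_inter.mp h).1
      rcases hok u v hadj with h' | h'
      · exact h' huS
      · exact h' hv.1
    · -- hj
      intro T hT
      rw [Finset.mem_powerset] at hT
      have hTJ : ∀ v ∈ T, v ∉ J := by
        intro v hv
        have := hT hv
        rw [hM, Finset.mem_compl, Finset.mem_union] at this
        push_neg at this
        exact this.1
      have hTN : ∀ v ∈ T, v ∉ NL := by
        intro v hv
        have := hT hv
        rw [hM, Finset.mem_compl, Finset.mem_union] at this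
        push_neg at this
        exact this.2
      simp only [Finset.mem_filter, Finset.mem_powerset]
      refine ⟨⟨Finset.subset_univ _, ?_⟩, ?_⟩
      · rw [okiff]
        intro i j hadj
        by_contra hc
        push_neg at hc
        obtain ⟨hi, hj⟩ := hc
        rw [Finset.mem_union] at hi hj
        rcases hi with hi | hi <;> rcases hj with hj | hj
        · exact hindep i hi j hj hadj
        · exact hTN j hj (Finset.mem_filter.mpr ⟨Finset.mem_univ _, i, hi, hadj⟩)
        · exact hTN i hi (Finset.mem_filter.mpr ⟨Finset.mem_univ _, j, hj, hadj.symm⟩)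
        · rcases hJ i j hadj with h' | h'
          · exact hTJ i hi h'
          · exact hTJ j hj h'
      · ext v
        simp only [Finset.mem_inter, Finset.mem_union]
        constructor
        · rintro ⟨hv | hv, hvJ⟩
          · exact hv
          · exact absurd hvJ (hTJ v hv)
        · intro hv
          exact ⟨Or.inl hv, hLJ hv⟩
    · -- left inverse
      intro S hS
      simp only [Finset.mem_filter, Finset.mem_powerset] at hS
      rw [← hS.2]
      ext v
      simp only [Finset.mem_union, Finset.mem_inter, Finset.mem_sdiff]
      tauto
    · -- right inverse
      intro T hT
      rw [Finset.mem_powerset] at hT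
      rw [Finset.union_sdiff_distrib, Finset.sdiff_eq_empty_iff_subset.mpr hLJ,
        Finset.empty_union, (Finset.sdiff_eq_self_iff_disjoint).mpr]
      rw [Finset.disjoint_left]
      intro v hv hvJ
      have := hT hv
      rw [hM, Finset.mem_compl, Finset.mem_union] at this
      push_neg at this
      exact this.1 hvJ
    · -- values agree
      intro S hS
      simp only [Finset.mem_filter, Finset.mem_powerset] at hS
      have hdisj : Disjoint L (S \ J) := by
        rw [Finset.disjoint_left]
        intro v hvL hvS
        exact (Finset.mem_sdiff.mp hvS).2 (hLJ hvL)
      have hSdec : S = L ∪ (S \ J) := by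
        rw [← hS.2]
        ext v
        simp only [Finset.mem_union, Finset.mem_inter, Finset.mem_sdiff]
        tauto
      have hsplit : S.card = L.card + (S \ J).card := by
        conv_lhs => rw [hSdec]
        rw [Finset.card_union_of_disjoint hdisj]
      have hJcard : J.card = L.card + (J \ L).card := by
        have h1 := Finset.card_sdiff_of_subset hLJ
        have h2 := Finset.card_le_card hLJ
        omega
      have hJk : J.card + Jᶜ.card = k := by
        rw [Finset.card_compl]
        have := Finset.card_le_univ J
        simp only [Finset.card_univ, Fintype.card_fin] at *
        omega
      have hcompl : Jᶜ.card = (NL \ J).card + M.card := by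
        have hMeq : M = Jᶜ \ NL := by
          ext v
          simp only [hM, Finset.mem_compl, Finset.mem_union, Finset.mem_sdiff]
          tauto
        have h1 : (Jᶜ \ NL).card + (Jᶜ ∩ NL).card = Jᶜ.card :=
          Finset.card_sdiff_add_card_inter _ _
        have h2 : NL \ J = Jᶜ ∩ NL := by
          ext v
          simp only [Finset.mem_sdiff, Finset.mem_compl, Finset.mem_inter]
          tauto
        rw [hMeq, h2]
        omega
      have hSM : (S \ J).card ≤ M.card := by
        apply Finset.card_le_card
        intro v hv
        rw [Finset.mem_sdiff] at hv
        rw [hM, Finset.mem_compl, Finset.mem_union]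
        push_neg
        refine ⟨hv.2, ?_⟩
        rw [hNL, Finset.mem_filter]
        push_neg
        intro _ u huL hadj
        obtain ⟨⟨-, hok⟩, hSJ⟩ := hS
        rw [okiff] at hok
        have huS : u ∈ S := by
          have h : u ∈ S ∩ J := by rw [hSJ]; exact huL
          exact (Finset.mem_inter.mp h).1
        rcases hok u v hadj with h' | h'
        · exact h' huS
        · exact h' hv.1
      have hexp : k - S.card = ((J \ L).card + (NL \ J).card) + (M.card - (S \ J).card) := by
        omega
      rw [hsplit]
      have hexp' : k - (L.card + (S \ J).card) =
          ((J \ L).card + (NL \ J).card) + (M.card - (S \ J).card) := by omega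
      rw [hexp', pow_add, pow_add]
      ring
  · -- L not independent: fiber empty
    rename_i hnind
    apply Finset.sum_eq_zero
    intro S hS
    exfalso
    simp only [Finset.mem_filter, Finset.mem_powerset] at hS
    obtain ⟨⟨-, hok⟩, hSJ⟩ := hS
    rw [okiff] at hok
    push_neg at hnind
    obtain ⟨i, hiL, j, hjL, hadj⟩ := hnind
    have hiS : i ∈ S := by
      have h : i ∈ S ∩ J := by rw [hSJ]; exact hiL
      exact (Finset.mem_inter.mp h).1
    have hjS : j ∈ S := by
      have h : j ∈ S ∩ J := by rw [hSJ]; exact hjL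
      exact (Finset.mem_inter.mp h).1
    rcases hok i j hadj with h' | h'
    · exact h' hiS
    · exact h' hjS




/-- For any vertex cover `J` of the coprimality graph `G`, the density
`A_G = ∏_p Σ_{F ⊆ E} (-1)^{|F|} p^{-v(F)}` equals
`∏_p Σ'_{L ⊆ J independent} p^{-|L|} (1 - 1/p)^{|J \ L| + |N(L) \ J|}`. -/
theorem stmt_2 (k : ℕ) (hk : 2 ≤ k) (G : SimpleGraph (Fin k)) [DecidableRel G.Adj]
    (J : Finset (Fin k)) (hJ : ∀ i j, G.Adj i j → i ∈ J ∨ j ∈ J) :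
    (∏' p : Nat.Primes, ∑ F ∈ G.edgeFinset.powerset,
        (-1 : ℝ) ^ F.card / ((p : ℕ) : ℝ) ^ {v : Fin k | ∃ e ∈ F, v ∈ e}.ncard) =
    ∏' p : Nat.Primes,
      ∑ L ∈ J.powerset.filter (fun L => ∀ i ∈ L, ∀ j ∈ L, ¬ G.Adj i j),
        (1 / ((p : ℕ) : ℝ) ^ L.card) *
          (1 - 1 / ((p : ℕ) : ℝ)) ^
            ((J \ L).card +
              ((Finset.univ.filter fun v : Fin k => ∃ u ∈ L, G.Adj u v) \ J).card) := by
  apply tprod_congr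
  intro p
  have key := (claimA G (1 / ((p : ℕ) : ℝ))).trans (claimB G J hJ (1 / ((p : ℕ) : ℝ)))
  have h1 : ∀ F ∈ G.edgeFinset.powerset,
      (-1 : ℝ) ^ F.card / ((p : ℕ) : ℝ) ^ {v : Fin k | ∃ e ∈ F, v ∈ e}.ncard
      = (-1 : ℝ) ^ F.card * (1 / ((p : ℕ) : ℝ)) ^
          (Finset.univ.filter (fun v => ∃ e ∈ F, v ∈ e)).card := by
    intro F _
    have hset : {v : Fin k | ∃ e ∈ F, v ∈ e}
        = ↑(Finset.univ.filter (fun v : Fin k => ∃ e ∈ F, v ∈ e)) := by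
      ext v; simp
    rw [hset, Set.ncard_coe_finset, one_div, inv_pow, div_eq_mul_inv]
  rw [Finset.sum_congr rfl h1, key]
  apply Finset.sum_congr rfl
  intro L _
  congr 1
  rw [div_pow, one_pow]
end

section
/- Let k ≥ 2, let G = (V,E) be a simple graph with vertex set V = {1,…,k}, and let J be any vertex cover of G. For complex numbers s_1,…,s_k with Re(s_i) > 1 for all i, the Dirichlet series Σ_{n_1,…,n_k ≥ 1} δ_G(n_1,…,n_k) / (n_1^{s_1} ⋯ n_k^{s_k}) converges absolutely and equals ζ(s_1) ⋯ ζ(s_k) · ∏_p ( Σ'_{L ⊆ J} ∏_{ℓ ∈ L} p^{−s_ℓ} · ∏_{i ∈ (J∖L) ∪ (N(L)∖J)} (1 − p^{−s_i}) ), where the product is over all primes p, Σ' denotes the sum over independent subsets L of J (no two vertices of L adjacent in G), and N(L) is the union of the neighbourhoods in G of the vertices of L. -/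
/-!
The coprimality indicator is multiplicative in all `k` variables at once: `δ_G(n)` is the
product over primes `p` of the indicator that the exponent vector `(v_p(n_1), …, v_p(n_k))` has
independent support. Hence the series has an Euler product whose `p`-factor is the sum of
`∏ p^(-v_i s_i)` over exponent vectors `v ∈ ℕ^k` with independent support. The Euler product
for multiplicative functions on `ℕ` applies after encoding a `k`-tuple of positive
integers as one positive integer, by sending exponent vectors to exponents through a bijection
`ℕ^k ≃ ℕ` fixing `0`, prime by prime.

For the local factor, group the vectors `v` by `L = supp v ∩ J`. Since `J` is a vertex cover,
`v` has independent support and meets `J` in `L` exactly when `L` is independent, `v_i ≥ 1` on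
`L`, `v_i = 0` on `(J ∖ L) ∪ (N(L) ∖ J)`, and `v_i` is arbitrary elsewhere; each group is a
product of geometric series. Multiplying by `∏_i (1 - p^(-s_i))`, whose Euler product is
`∏_i ζ(s_i)⁻¹`, gives the formula.
-/

open Finset Function

section PiProduct

variable {R β : Type*} [NormedCommRing R]

theorem summable_norm_pi_prod {k : ℕ} (g : Fin k → β → R)
    (hg : ∀ i, Summable fun b => ‖g i b‖) :
    Summable fun v : Fin k → β => ‖∏ i, g i (v i)‖ := by
  induction k with
  | zero => exact Summable.of_finite
  | succ k ih =>
    rw [← (Fin.consEquiv fun _ => β).summable_iff]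
    simpa [Function.comp_def, Fin.prod_univ_succ] using
      (hg 0).mul_norm (ih (fun i => g i.succ) fun i => hg i.succ)

theorem tsum_pi_prod [CompleteSpace R] {k : ℕ} (g : Fin k → β → R)
    (hg : ∀ i, Summable fun b => ‖g i b‖) :
    ∑' v : Fin k → β, ∏ i, g i (v i) = ∏ i, ∑' b, g i b := by
  induction k with
  | zero => simp
  | succ k ih =>
    rw [← (Fin.consEquiv fun _ => β).tsum_eq, Fin.prod_univ_succ, ← ih _ fun i => hg i.succ,
      tsum_mul_tsum_of_summable_norm (hg 0) (summable_norm_pi_prod _ fun i => hg i.succ)]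
    simp [Fin.prod_univ_succ]

end PiProduct

theorem one_sub_mul_tsum_ite_pow {x : ℂ} (hx : ‖x‖ < 1) (P Q : Prop) [Decidable P] [Decidable Q]
    (hPQ : P → ¬Q) :
    (1 - x) * ∑' m : ℕ, (if (P → m ≠ 0) ∧ (Q → m = 0) then x ^ m else 0) =
      if P then x else if Q then 1 - x else 1 := by
  have hx1 : 1 - x ≠ 0 := sub_ne_zero.mpr fun h => by simp [← h] at hx
  by_cases hP : P
  · simp only [hP, hPQ hP, forall_const, false_imp_iff, and_true, if_true]
    rw [(summable_geometric_of_norm_lt_one hx).summable_of_eq_zero_or_self (fun m => by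
      by_cases hm : m = 0 <;> simp [hm]) |>.tsum_eq_zero_add]
    simp [pow_succ', tsum_mul_left, tsum_geometric_of_norm_lt_one hx]
    field_simp
  · by_cases hQ : Q
    · simp [hP, hQ]
    · simp [hP, hQ, tsum_geometric_of_norm_lt_one hx, hx1]

theorem summable_norm_ite_pow {x : ℂ} (hx : ‖x‖ < 1) (c : ℕ → Prop) [DecidablePred c] :
    Summable fun m : ℕ => ‖if c m then x ^ m else 0‖ :=
  (summable_norm_geometric_of_norm_lt_one hx).of_nonneg_of_le (fun _ => norm_nonneg _)
    fun m => by split_ifs <;> simp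

theorem prod_ite_mem_ite_mem {ι M : Type*} [Fintype ι] [DecidableEq ι] [CommMonoid M]
    {s t : Finset ι} (h : Disjoint s t) (f g : ι → M) :
    ∏ i, (if i ∈ s then f i else if i ∈ t then g i else 1) = (∏ i ∈ s, f i) * ∏ i ∈ t, g i := by
  have ht : univ.filter (· ∉ s) ∩ t = t :=
    inter_eq_right.mpr fun i hi => mem_filter.mpr ⟨mem_univ i, disjoint_right.mp h hi⟩
  simp [prod_ite, prod_ite_mem, ht]

namespace SimpleGraph

variable {k : ℕ} (G : SimpleGraph (Fin k)) [DecidableRel G.Adj] (J : Finset (Fin k))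

abbrev indepSubsets : Finset (Finset (Fin k)) :=
  J.powerset.filter fun L => ∀ i ∈ L, ∀ j ∈ L, ¬ G.Adj i j

/-- Where an exponent vector `v` with independent support and `supp v ∩ J = L` must vanish. -/
abbrev forcedZero (L : Finset (Fin k)) : Finset (Fin k) :=
  (J \ L) ∪ (univ.filter (fun v => ∃ u ∈ L, G.Adj u v) \ J)

variable {G J}

theorem disjoint_forcedZero {L : Finset (Fin k)} (hL : L ∈ G.indepSubsets J) :
    Disjoint L (G.forcedZero J L) := by
  have hLJ := mem_powerset.mp (mem_filter.mp hL).1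
  simp only [forcedZero, disjoint_union_right, disjoint_sdiff, true_and]
  exact disjoint_sdiff.mono_left hLJ

theorem isIndepSet_support_and_eq_iff (hJ : ∀ i j, G.Adj i j → i ∈ J ∨ j ∈ J)
    {L : Finset (Fin k)} (hL : L ∈ G.indepSubsets J) (v : Fin k → ℕ) :
    (∀ i, (i ∈ L → v i ≠ 0) ∧ (i ∈ G.forcedZero J L → v i = 0)) ↔
      G.IsIndepSet (Function.support v) ∧ J.filter (v · ≠ 0) = L := by
  obtain ⟨hLJ, hLind⟩ := mem_filter.mp hL
  replace hLJ := mem_powerset.mp hLJ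
  simp only [forcedZero, mem_union, mem_sdiff, mem_filter, mem_univ, true_and]
  constructor
  · intro hv
    have hvL : ∀ i ∈ J, v i ≠ 0 → i ∈ L := fun i hi hvi => by
      by_contra hiL; exact hvi ((hv i).2 (Or.inl ⟨hi, hiL⟩))
    refine ⟨fun i hi j hj _ hij => ?_, ?_⟩
    · wlog hiJ : i ∈ J generalizing i j
      · exact this j hj i hi (G.ne_of_adj hij.symm) hij.symm ((hJ i j hij).resolve_left hiJ)
      have hiL := hvL i hiJ hi
      by_cases hjJ : j ∈ J
      · exact hLind i hiL j (hvL j hjJ hj) hij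
      · exact hj ((hv j).2 (Or.inr ⟨⟨i, hiL, hij⟩, hjJ⟩))
    · ext i
      simp only [mem_filter]
      exact ⟨fun h => hvL i h.1 h.2, fun h => ⟨hLJ h, (hv i).1 h⟩⟩
  · rintro ⟨hind, rfl⟩ i
    simp only [mem_filter]
    refine ⟨fun h => h.2, ?_⟩
    rintro (⟨hiJ, hiL⟩ | ⟨⟨u, ⟨-, hu⟩, hui⟩, -⟩)
    · by_contra h; exact hiL ⟨hiJ, h⟩
    · by_contra h; exact hind hu h (G.ne_of_adj hui) hui

open scoped Classical in
theorem indicator_isIndepSet_mul_prod_eq_sum (hJ : ∀ i j, G.Adj i j → i ∈ J ∨ j ∈ J)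
    (x : Fin k → ℂ) (v : Fin k → ℕ) :
    (if G.IsIndepSet (Function.support v) then 1 else 0) * ∏ i, x i ^ v i =
      ∑ L ∈ G.indepSubsets J,
        ∏ i, if (i ∈ L → v i ≠ 0) ∧ (i ∈ G.forcedZero J L → v i = 0) then x i ^ v i else 0 := by
  simp_rw [Fintype.prod_ite_zero]
  rw [sum_congr rfl (g := fun L => if G.IsIndepSet (Function.support v) ∧ J.filter (v · ≠ 0) = L
    then ∏ i, x i ^ v i else 0) fun L hL => by simp only [isIndepSet_support_and_eq_iff hJ hL v]]
  by_cases hind : G.IsIndepSet (Function.support v)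
  · have hmem : J.filter (v · ≠ 0) ∈ G.indepSubsets J :=
      mem_filter.mpr ⟨mem_powerset.mpr (filter_subset _ _), fun i hi j hj hij =>
        hind (mem_filter.mp hi).2 (mem_filter.mp hj).2 (G.ne_of_adj hij) hij⟩
    simp [hind, sum_ite_eq, hmem]
  · simp [hind]

open scoped Classical in
theorem prod_one_sub_mul_tsum_indicator_isIndepSet (hJ : ∀ i j, G.Adj i j → i ∈ J ∨ j ∈ J)
    (x : Fin k → ℂ) (hx : ∀ i, ‖x i‖ < 1) :
    (∏ i, (1 - x i)) *
        ∑' v : Fin k → ℕ, (if G.IsIndepSet (Function.support v) then 1 else 0) * ∏ i, x i ^ v i =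
      ∑ L ∈ G.indepSubsets J, (∏ l ∈ L, x l) * ∏ i ∈ G.forcedZero J L, (1 - x i) := by
  have hw (L : Finset (Fin k)) (i : Fin k) := summable_norm_ite_pow (hx i)
    fun m => (i ∈ L → m ≠ 0) ∧ (i ∈ G.forcedZero J L → m = 0)
  simp_rw [indicator_isIndepSet_mul_prod_eq_sum hJ]
  rw [Summable.tsum_finsetSum fun L _ => (summable_norm_pi_prod _ (hw L)).of_norm, mul_sum]
  refine sum_congr rfl fun L hL => ?_
  have hdisj := disjoint_forcedZero hL
  rw [tsum_pi_prod _ (hw L), ← prod_mul_distrib, ← prod_ite_mem_ite_mem hdisj]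
  exact prod_congr rfl fun i _ =>
    one_sub_mul_tsum_ite_pow (hx i) _ _ fun h => Finset.disjoint_left.mp hdisj h

end SimpleGraph

theorem Function.HasFiniteSupport.hasFiniteMulSupport_apply {α N M : Type*} [Zero N] [One M]
    {v : α → N} (hv : HasFiniteSupport v) {φ : α → N → M} (hφ : ∀ a, φ a 0 = 1) :
    HasFiniteMulSupport fun a => φ a (v a) :=
  Set.Finite.subset hv fun a ha h => ha (by simp [h, hφ])

theorem hasFiniteMulSupport_apply_factorization {ι M : Type*} [Finite ι] [One M]
    (n : ι → ℕ) {φ : ℕ → (ι → ℕ) → M} (hφ : ∀ p, φ p 0 = 1) :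
    HasFiniteMulSupport fun p => φ p fun i => (n i).factorization p :=
  HasFiniteSupport.hasFiniteMulSupport_apply
    (HasFiniteSupport.pi fun i => (n i).factorization.hasFiniteSupport) hφ

section PrimePowers

variable {R : Type*} [CommMonoidWithZero R]

noncomputable def ofPrimePowers (h : ℕ → ℕ → R) (m : ℕ) : R :=
  if m = 0 then 0 else ∏ᶠ p, h p (m.factorization p)

namespace ofPrimePowers

variable {h : ℕ → ℕ → R} (h0 : ∀ p, h p 0 = 1)
include h0

theorem prime_pow {p : ℕ} (hp : p.Prime) (e : ℕ) : ofPrimePowers h (p ^ e) = h p e := by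
  rw [ofPrimePowers, if_neg (pow_ne_zero e hp.ne_zero), hp.factorization_pow]
  refine (finprod_eq_single (fun q => h q (Finsupp.single p e q)) p fun q hq => ?_).trans (by simp)
  simp [Ne.symm hq, h0]

theorem one : ofPrimePowers h 1 = 1 := by
  simpa [h0] using prime_pow h0 Nat.prime_two 0

theorem mul_of_coprime {m n : ℕ} (hmn : m.Coprime n) :
    ofPrimePowers h (m * n) = ofPrimePowers h m * ofPrimePowers h n := by
  rcases eq_or_ne m 0 with rfl | hm
  · simp [ofPrimePowers]
  rcases eq_or_ne n 0 with rfl | hn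
  · simp [ofPrimePowers]
  have hdisj : ∀ p, m.factorization p = 0 ∨ n.factorization p = 0 := fun p => by
    by_contra! hp
    simp only [ne_eq, ← Finsupp.mem_support_iff, Nat.support_factorization] at hp
    exact disjoint_left.mp hmn.disjoint_primeFactors hp.1 hp.2
  simp only [ofPrimePowers, mul_ne_zero hm hn, hm, hn, if_false, Nat.factorization_mul hm hn,
    Finsupp.add_apply]
  rw [← finprod_mul_distrib (m.factorization.hasFiniteSupport.hasFiniteMulSupport_apply h0)
    (n.factorization.hasFiniteSupport.hasFiniteMulSupport_apply h0)]
  refine finprod_congr fun p => ?_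
  rcases hdisj p with h' | h' <;> simp [h', h0]

end ofPrimePowers

end PrimePowers

theorem exists_equiv_nat_map_zero (α : Type*) [Zero α] [Countable α] [Infinite α] :
    ∃ E : α ≃ ℕ, E 0 = 0 := by
  obtain ⟨e⟩ := nonempty_equiv_of_countable (α := α) (β := ℕ)
  exact ⟨e.trans (Equiv.swap (e 0) 0), by simp⟩

theorem Nat.factorization_factorizationEquiv_symm
    (f : {f : ℕ →₀ ℕ // ∀ p ∈ f.support, p.Prime}) :
    (Nat.factorizationEquiv.symm f : ℕ).factorization = f :=
  Nat.prod_pow_factorization_eq_self f.2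

section Encoding

variable {ι α : Type*} [Fintype ι] [DecidableEq α] (E : (ι → ℕ) ≃ ℕ) (hE : E 0 = 0)

noncomputable def finsuppPiEquiv : (ι → α →₀ ℕ) ≃ (α →₀ ℕ) where
  toFun F := Finsupp.onFinset (univ.biUnion fun i => (F i).support) (fun a => E fun i => F i a)
    fun a ha => by
      contrapose! ha
      simp only [mem_biUnion, mem_univ, true_and, Finsupp.mem_support_iff, not_exists,
        not_not] at ha
      rw [← hE]
      exact congrArg E (funext ha)
  invFun f i := Finsupp.onFinset f.support (fun a => E.symm (f a) i) fun a ha => by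
    contrapose! ha
    simp [Finsupp.notMem_support_iff.mp ha, E.symm_apply_eq.mpr hE.symm]
  left_inv F := by ext; simp
  right_inv f := by ext; simp

@[simp]
theorem finsuppPiEquiv_apply (F : ι → α →₀ ℕ) (a : α) :
    finsuppPiEquiv E hE F a = E fun i => F i a := rfl

theorem mem_support_finsuppPiEquiv {F : ι → α →₀ ℕ} {a : α} :
    a ∈ (finsuppPiEquiv E hE F).support ↔ ∃ i, a ∈ (F i).support := by
  simp [← hE, E.injective.eq_iff, funext_iff]

noncomputable def pnatPiEquiv : (ι → ℕ+) ≃ ℕ+ :=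
  (Equiv.piCongrRight fun _ => Nat.factorizationEquiv).trans <|
    Equiv.subtypePiEquivPi.symm.trans <|
      ((finsuppPiEquiv E hE).subtypeEquiv fun F => by
        simp only [mem_support_finsuppPiEquiv]; grind).trans Nat.factorizationEquiv.symm

theorem factorization_pnatPiEquiv (n : ι → ℕ+) (p : ℕ) :
    (pnatPiEquiv E hE n : ℕ).factorization p = E fun i => (n i : ℕ).factorization p := by
  simp [pnatPiEquiv, Nat.factorization_factorizationEquiv_symm]
  rfl

end Encoding

theorem eulerProduct_pi_hasProd {R ι : Type*} [NormedCommRing R] [CompleteSpace R] [Fintype ι]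
    [Nonempty ι] (g : ℕ → (ι → ℕ) → R) (hg : ∀ p, g p 0 = 1)
    (hsum : Summable fun n : ι → ℕ+ => ‖∏ᶠ p, g p fun i => (n i : ℕ).factorization p‖) :
    HasProd (fun p : Nat.Primes => ∑' v, g p v)
      (∑' n : ι → ℕ+, ∏ᶠ p, g p fun i => (n i : ℕ).factorization p) := by
  obtain ⟨E, hE⟩ := exists_equiv_nat_map_zero (ι → ℕ)
  have h0 (p : ℕ) : g p (E.symm 0) = 1 := by rw [E.symm_apply_eq.mpr hE.symm, hg]
  set f := ofPrimePowers fun p e => g p (E.symm e)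
  have hf (n : ι → ℕ+) :
      f (pnatPiEquiv E hE n) = ∏ᶠ p, g p fun i => (n i : ℕ).factorization p := by
    simp [f, ofPrimePowers, factorization_pnatPiEquiv]
  have hf0 : f 0 = 0 := if_pos rfl
  have hsum' : Summable (‖f ·‖) := by
    refine (PNat.coe_injective.summable_iff fun m hm => ?_).mp <|
      (pnatPiEquiv E hE).summable_iff.mp <| hsum.congr fun n => by simp [hf]
    obtain rfl : m = 0 := by simpa [Nat.pos_iff_ne_zero] using fun h => hm ⟨⟨m, h⟩, rfl⟩
    simp [hf0]
  convert EulerProduct.eulerProduct_hasProd (ofPrimePowers.one h0)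
    (ofPrimePowers.mul_of_coprime h0) hsum' hf0 using 1
  · ext p
    rw [← E.symm.tsum_eq]
    exact tsum_congr fun e =>
      (ofPrimePowers.prime_pow (h := fun p e => g p (E.symm e)) h0 p.2 e).symm
  · rw [← tsum_pnat_eq_tsum_of_eq_zero hf0, ← (pnatPiEquiv E hE).tsum_eq]
    simp [hf]

theorem MonoidHom.finprod_pow_factorization {M : Type*} [CommMonoid M] (χ : ℕ →* M) {m : ℕ}
    (hm : m ≠ 0) : ∏ᶠ p, χ p ^ m.factorization p = χ m := by
  rw [finprod_eq_prod_of_mulSupport_subset _ (s := m.factorization.support) fun p hp => by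
    contrapose! hp; simp [Finsupp.notMem_support_iff.mp hp]]
  conv_rhs => rw [← Nat.prod_factorization_pow_eq_self hm]
  simp [Finsupp.prod, map_prod]

theorem SimpleGraph.isIndepSet_support_factorization_iff {ι : Type*} (G : SimpleGraph ι)
    {n : ι → ℕ} (hn : ∀ i, n i ≠ 0) :
    (∀ p, G.IsIndepSet (Function.support fun i => (n i).factorization p)) ↔
      ∀ i j, G.Adj i j → Nat.gcd (n i) (n j) = 1 := by
  have hfac {i p} : (n i).factorization p ≠ 0 ↔ p.Prime ∧ p ∣ n i := by
    simp [Nat.factorization_eq_zero_iff, hn]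
  constructor
  · refine fun h i j hij => Nat.coprime_of_dvd fun p hp hpi hpj => h p ?_ ?_ (G.ne_of_adj hij) hij
    · exact hfac.mpr ⟨hp, hpi⟩
    · exact hfac.mpr ⟨hp, hpj⟩
  · rintro h p i hi j hj - hij
    obtain ⟨hp, hpi⟩ := hfac.mp hi
    exact hp.one_lt.ne' (Nat.dvd_one.mp (h i j hij ▸ Nat.dvd_gcd hpi (hfac.mp hj).2))

open scoped Classical in
theorem SimpleGraph.finprod_indicator_isIndepSet_support {ι R : Type*} [Finite ι]
    [CommMonoidWithZero R] (G : SimpleGraph ι) {n : ι → ℕ} (hn : ∀ i, n i ≠ 0)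
    [Decidable (∀ i j, G.Adj i j → Nat.gcd (n i) (n j) = 1)] :
    ∏ᶠ p, (if G.IsIndepSet (Function.support fun i => (n i).factorization p) then (1 : R) else 0) =
      if ∀ i j, G.Adj i j → Nat.gcd (n i) (n j) = 1 then 1 else 0 := by
  by_cases h : ∀ p, G.IsIndepSet (Function.support fun i => (n i).factorization p)
  · simp [h, if_pos ((G.isIndepSet_support_factorization_iff hn).mp h)]
  · rw [if_neg (mt (G.isIndepSet_support_factorization_iff hn).mpr h)]
    obtain ⟨p, hp⟩ := not_forall.mp h
    exact finprod_eq_zero _ p (if_neg hp)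
      (hasFiniteMulSupport_apply_factorization n
        (φ := fun _ v => if G.IsIndepSet (Function.support v) then (1 : R) else 0)
        fun _ => by simp [SimpleGraph.IsIndepSet])

open scoped Classical in
theorem SimpleGraph.coprimeIndicator_div_eq_finprod {ι : Type*} [Fintype ι] (G : SimpleGraph ι)
    {s : ι → ℂ} (hs : ∀ i, s i ≠ 0) (n : ι → ℕ+)
    [Decidable (∀ i j, G.Adj i j → Nat.gcd (n i) (n j) = 1)] :
    (if ∀ i j, G.Adj i j → Nat.gcd (n i) (n j) = 1 then (1 : ℂ) else 0) /
        ∏ i, ((n i : ℕ) : ℂ) ^ s i =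
      ∏ᶠ p, (if G.IsIndepSet (Function.support fun i => (n i : ℕ).factorization p) then 1 else 0) *
        ∏ i, ((p : ℂ) ^ (-s i)) ^ (n i : ℕ).factorization p := by
  rw [finprod_mul_distrib (hasFiniteMulSupport_apply_factorization _
      (φ := fun _ v => if G.IsIndepSet (Function.support v) then (1 : ℂ) else 0)
      fun _ => by simp [SimpleGraph.IsIndepSet])
    (hasFiniteMulSupport_apply_factorization _ (φ := fun p v => ∏ i, ((p : ℂ) ^ (-s i)) ^ v i)
      fun _ => by simp),
    G.finprod_indicator_isIndepSet_support fun i => (n i).ne_zero,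
    finprod_prod_comm _ _ fun i _ =>
      (n i : ℕ).factorization.hasFiniteSupport.hasFiniteMulSupport_apply
        (φ := fun p e => ((p : ℂ) ^ (-s i)) ^ e) fun _ => pow_zero _]
  simp_rw [div_eq_mul_inv, ← prod_inv_distrib, ← Complex.cpow_neg]
  congr 1
  refine prod_congr rfl fun i _ => ?_
  exact ((riemannZetaSummandHom (hs i)).toMonoidHom.finprod_pow_factorization (n i).ne_zero).symm

theorem norm_prime_cpow_neg_lt_one {p : ℕ} (hp : p.Prime) {s : ℂ} (hs : 0 < s.re) :
    ‖(p : ℂ) ^ (-s)‖ < 1 := by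
  rw [Complex.norm_natCast_cpow_of_pos hp.pos]
  exact Real.rpow_lt_one_of_one_lt_of_neg (by exact_mod_cast hp.one_lt) (by simpa using hs)

theorem riemannZeta_inv_hasProd {s : ℂ} (hs : 1 < s.re) :
    HasProd (fun p : Nat.Primes => 1 - (p : ℂ) ^ (-s)) (riemannZeta s)⁻¹ := by
  simpa using (riemannZeta_eulerProduct_hasProd hs).inv₀ (riemannZeta_ne_zero_of_one_lt_re hs)

theorem summable_norm_div_prod_cpow {k : ℕ} {s : Fin k → ℂ} (hs : ∀ i, 1 < (s i).re)
    {c : (Fin k → ℕ+) → ℂ} (hc : ∀ n, ‖c n‖ ≤ 1) :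
    Summable fun n : Fin k → ℕ+ => ‖c n / ∏ i, ((n i : ℕ) : ℂ) ^ s i‖ := by
  refine (summable_norm_pi_prod (fun i (b : ℕ+) => ((b : ℕ) : ℂ) ^ (-s i)) fun i =>
    (summable_riemannZetaSummand (hs i)).comp_injective PNat.coe_injective).of_nonneg_of_le
    (fun _ => norm_nonneg _) fun n => ?_
  rw [div_eq_mul_inv, ← prod_inv_distrib, norm_mul]
  simp_rw [← Complex.cpow_neg]
  exact mul_le_of_le_one_left (norm_nonneg _) (hc n)

/-- Dirichlet series of `δ_G` (Theorem 3 of the paper): for any vertex cover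
`J` of `G` and `Re(s_i) > 1`, the series converges absolutely and equals
`ζ(s_1)⋯ζ(s_k)` times the Euler product over independent subsets `L ⊆ J`. -/
theorem stmt_4 (k : ℕ) (hk : 2 ≤ k) (G : SimpleGraph (Fin k)) [DecidableRel G.Adj]
    (J : Finset (Fin k)) (hJ : ∀ i j, G.Adj i j → i ∈ J ∨ j ∈ J)
    (s : Fin k → ℂ) (hs : ∀ i, 1 < (s i).re) :
    Summable (fun n : Fin k → ℕ+ =>
      ‖(if ∀ i j, G.Adj i j → Nat.gcd (n i : ℕ) (n j : ℕ) = 1 then (1 : ℂ) else 0) /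
        ∏ i, ((n i : ℕ) : ℂ) ^ s i‖) ∧
    (∑' n : Fin k → ℕ+,
      (if ∀ i j, G.Adj i j → Nat.gcd (n i : ℕ) (n j : ℕ) = 1 then (1 : ℂ) else 0) /
        ∏ i, ((n i : ℕ) : ℂ) ^ s i) =
      (∏ i, riemannZeta (s i)) *
        ∏' p : Nat.Primes,
          ∑ L ∈ J.powerset.filter (fun L => ∀ i ∈ L, ∀ j ∈ L, ¬ G.Adj i j),
            (∏ l ∈ L, ((p : ℕ) : ℂ) ^ (-s l)) *
              ∏ i ∈ (J \ L) ∪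
                  ((Finset.univ.filter fun v : Fin k => ∃ u ∈ L, G.Adj u v) \ J),
                (1 - ((p : ℕ) : ℂ) ^ (-s i)) := by
  classical
  have : Nonempty (Fin k) := ⟨⟨0, by omega⟩⟩
  have hterm := G.coprimeIndicator_div_eq_finprod fun i => Complex.ne_zero_of_one_lt_re (hs i)
  have hsum := summable_norm_div_prod_cpow hs (c := fun n =>
    if ∀ i j, G.Adj i j → Nat.gcd (n i : ℕ) (n j : ℕ) = 1 then (1 : ℂ) else 0)
    fun n => by split_ifs <;> simp
  have hEuler := eulerProduct_pi_hasProd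
    (fun p v => (if G.IsIndepSet (support v) then 1 else 0) * ∏ i, ((p : ℂ) ^ (-s i)) ^ v i)
    (fun p => by simp [SimpleGraph.IsIndepSet]) (hsum.congr fun n => by rw [hterm])
  have hF := (hasProd_prod (s := univ) fun i _ => riemannZeta_inv_hasProd (hs i)).mul hEuler
  rw [funext fun p : Nat.Primes => G.prod_one_sub_mul_tsum_indicator_isIndepSet hJ _
    fun i => norm_prime_cpow_neg_lt_one p.2 (by linarith [hs i])] at hF
  refine ⟨hsum, ?_⟩
  rw [tsum_congr fun n => hterm n, hF.tprod_eq, ← mul_assoc, ← prod_mul_distrib,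
    prod_eq_one fun i _ => mul_inv_cancel₀ (riemannZeta_ne_zero_of_one_lt_re (hs i)), one_mul]
end

section
/- Let k ≥ 2 and r ≥ 1 be integers. For every (n_1,…,n_k) ∈ ℕ^k, β'_r(n_1,…,n_k) = Σ_{j=r}^{k(k−1)/2} (−1)^{j−r} C(j−1, r−1) Σ_{E ⊆ V^{(2)}, |E| = j} δ_G(n_1,…,n_k), where the inner sum is over all edge sets E of cardinality j on the vertex set V = {1,…,k}, G = (V,E), and C(j−1,r−1) is the binomial coefficient. -/
/-!
Let `m` be the number of coprime pairs, i.e. the number of edges of the coprimality graph of `n`.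
An edge set `E` has `δ_G(n) = 1` exactly when all its edges are coprime pairs, so the inner sum
over `|E| = j` is `C(m, j)` and the theorem reduces to the binomial identity
`∑_{j ≥ r} (-1)^(j-r) C(j-1, r-1) C(m, j) = [r ≤ m]`. This follows by induction on `m` via
Pascal's rule: the increment `∑_j (-1)^(j-r) C(j-1, r-1) C(m, j-1)` becomes, by
`C(m, i) C(i, s) = C(m, s) C(m-s, i-s)`, a multiple of an alternating binomial sum, and so
vanishes unless `m = r - 1`.
-/

open Finset

theorem Int.alternating_sum_range_choose_of_lt {n N : ℕ} (h : n < N) :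
    ∑ t ∈ Finset.range N, (-1 : ℤ) ^ t * n.choose t = if n = 0 then 1 else 0 := by
  rw [← Int.alternating_sum_range_choose]
  refine (sum_subset (range_subset_range.2 h) fun t _ ht => ?_).symm
  rw [mem_range, not_lt] at ht
  simp [Nat.choose_eq_zero_of_lt (by omega : n < t)]

theorem sum_neg_one_pow_choose_mul_choose (s m N : ℕ) (h : m < s + N) :
    ∑ t ∈ range N, (-1 : ℤ) ^ t * (s + t).choose s * m.choose (s + t) =
      if m = s then 1 else 0 := by
  calc ∑ t ∈ range N, (-1 : ℤ) ^ t * (s + t).choose s * m.choose (s + t)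
      = m.choose s * ∑ t ∈ range N, (-1 : ℤ) ^ t * (m - s).choose t := by
        rw [mul_sum]
        refine sum_congr rfl fun t _ => ?_
        have := congrArg (Nat.cast (R := ℤ)) (Nat.choose_mul (n := m) (Nat.le_add_right s t))
        push_cast [Nat.add_sub_cancel_left] at this
        linear_combination (-1 : ℤ) ^ t * this
    _ = if m = s then 1 else 0 := by
        rcases lt_or_ge m s with hms | hsm
        · simp [Nat.choose_eq_zero_of_lt hms, hms.ne]
        rw [Int.alternating_sum_range_choose_of_lt (by omega)]
        rcases hsm.eq_or_lt with rfl | hsm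
        · simp
        · simp [hsm.ne', Nat.sub_ne_zero_of_lt hsm]

-- The sum of the theorem with `r = s + 1` and `j = s + t + 1`; the bound on `m` makes the range
-- of `t` cover every nonzero term.
theorem sum_neg_one_pow_choose_mul_choose_succ (s N : ℕ) :
    ∀ m ≤ s + N, ∑ t ∈ range N, (-1 : ℤ) ^ t * (s + t).choose s * m.choose (s + t + 1) =
      if s < m then 1 else 0
  | 0, _ => by simp
  | m + 1, hm => by
    simp only [Nat.choose_succ_succ', Nat.cast_add, mul_add, sum_add_distrib,
      sum_neg_one_pow_choose_mul_choose s m N (by omega),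
      sum_neg_one_pow_choose_mul_choose_succ s N m (by omega)]
    split_ifs <;> omega

theorem sum_Icc_neg_one_pow_choose_mul_choose {r m N : ℕ} (hr : 1 ≤ r) (hm : m ≤ N) :
    ∑ j ∈ Icc r N, (-1 : ℤ) ^ (j - r) * (j - 1).choose (r - 1) * m.choose j =
      if r ≤ m then 1 else 0 := by
  obtain ⟨s, rfl⟩ : ∃ s, r = s + 1 := ⟨r - 1, by omega⟩
  rw [← Ico_add_one_right_eq_Icc, sum_Ico_eq_sum_range]
  convert sum_neg_one_pow_choose_mul_choose_succ s (N + 1 - (s + 1)) m (by omega) using 2 with t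
  · rw [add_tsub_cancel_left, Nat.add_sub_cancel, add_right_comm, Nat.add_sub_cancel]
  · simp only [Nat.succ_le_iff]

theorem SimpleGraph.card_filter_lt_adj_eq_card_edgeFinset {V : Type*} [LinearOrder V] [Fintype V]
    (G : SimpleGraph V) [DecidableRel G.Adj] :
    #{q : V × V | q.1 < q.2 ∧ G.Adj q.1 q.2} = #G.edgeFinset := by
  refine card_bij (fun q _ => s(q.1, q.2)) (fun q hq => ?_) ?_ fun e he => ?_
  · simpa using (mem_filter.1 hq).2.2
  · rintro ⟨a, b⟩ hab ⟨c, d⟩ hcd h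
    simp only [mem_filter, mem_univ, true_and] at hab hcd
    rcases Sym2.eq_iff.1 h with ⟨rfl, rfl⟩ | ⟨rfl, rfl⟩
    · rfl
    · exact absurd hab.1 hcd.1.not_gt
  · induction e with
    | _ a b =>
      rw [mem_edgeFinset, SimpleGraph.mem_edgeSet] at he
      rcases lt_or_gt_of_ne he.ne with h | h
      · exact ⟨(a, b), by simp [h, he], rfl⟩
      · exact ⟨(b, a), by simp [h, he.symm], Sym2.eq_swap⟩

theorem Finset.filter_powersetCard_subset_eq_powersetCard {α : Type*} [DecidableEq α]
    {s t : Finset α} (hst : s ⊆ t) (j : ℕ) :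
    {E ∈ powersetCard j t | E ⊆ s} = powersetCard j s := by
  ext E
  simp only [mem_filter, mem_powersetCard]
  exact ⟨fun ⟨⟨_, hE⟩, hEs⟩ => ⟨hEs, hE⟩, fun ⟨hEs, hE⟩ => ⟨⟨hEs.trans hst, hE⟩, hEs⟩⟩

def coprimalityGraph {V : Type*} (n : V → ℕ) : SimpleGraph V where
  Adj a b := a ≠ b ∧ Nat.Coprime (n a) (n b)
  symm := ⟨fun _ _ h => ⟨h.1.symm, h.2.symm⟩⟩
  loopless := ⟨fun _ h => h.1 rfl⟩

instance {V : Type*} [DecidableEq V] (n : V → ℕ) : DecidableRel (coprimalityGraph n).Adj :=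
  fun a b => inferInstanceAs (Decidable (a ≠ b ∧ Nat.Coprime (n a) (n b)))

theorem subset_edgeFinset_coprimalityGraph_iff {V : Type*} [Fintype V] [DecidableEq V] {n : V → ℕ}
    {E : Finset (Sym2 V)} (hE : E ⊆ (⊤ : SimpleGraph V).edgeFinset) :
    E ⊆ (coprimalityGraph n).edgeFinset ↔ ∀ a b, s(a, b) ∈ E → Nat.gcd (n a) (n b) = 1 := by
  refine ⟨fun h a b hab => (SimpleGraph.mem_edgeFinset.1 (h hab)).2, fun h e he => ?_⟩
  induction e with
  | _ a b =>
    have hne : a ≠ b := by simpa using hE he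
    exact SimpleGraph.mem_edgeFinset.2 ⟨hne, h a b he⟩

theorem stmt_7_general (k r : ℕ) (hr : 1 ≤ r) (n : Fin k → ℕ) :
    (if r ≤ (Finset.univ.filter fun q : Fin k × Fin k =>
          q.1 < q.2 ∧ Nat.gcd (n q.1) (n q.2) = 1).card then (1 : ℤ) else 0) =
    ∑ j ∈ Finset.Icc r (k * (k - 1) / 2), (-1 : ℤ) ^ (j - r) * ((j - 1).choose (r - 1)) *
      ∑ E ∈ (⊤ : SimpleGraph (Fin k)).edgeFinset.powerset.filter (fun E => E.card = j),
        (if ∀ a b : Fin k, s(a, b) ∈ E → Nat.gcd (n a) (n b) = 1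
          then (1 : ℤ) else 0) := by
  set G := coprimalityGraph n
  have hpairs : #{q : Fin k × Fin k | q.1 < q.2 ∧ Nat.gcd (n q.1) (n q.2) = 1} =
      #G.edgeFinset := by
    rw [← G.card_filter_lt_adj_eq_card_edgeFinset]
    exact congrArg card (filter_congr fun q _ => and_congr_right fun h => (and_iff_right h.ne).symm)
  have hsubsets (j : ℕ) :
      ∑ E ∈ (⊤ : SimpleGraph (Fin k)).edgeFinset.powerset.filter (fun E => E.card = j),
        (if ∀ a b : Fin k, s(a, b) ∈ E → Nat.gcd (n a) (n b) = 1 then (1 : ℤ) else 0) =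
      (#G.edgeFinset).choose j := by
    rw [sum_boole, ← powersetCard_eq_filter, ← filter_congr fun E hE =>
      subset_edgeFinset_coprimalityGraph_iff (mem_powersetCard.1 hE).1,
      filter_powersetCard_subset_eq_powersetCard (G.edgeFinset_subset_edgeFinset.2 le_top),
      card_powersetCard]
  have hedges : #G.edgeFinset ≤ k * (k - 1) / 2 := by
    simpa [Nat.choose_two_right] using G.card_edgeFinset_le_card_choose_two
  simp only [hpairs, hsubsets]
  exact (sum_Icc_neg_one_pow_choose_mul_choose hr hedges).symm

/-- Inclusion–exclusion identity for `β'_r`: the indicator of "at least `r` of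
the pairs `(n_i, n_j)`, `i < j`, are coprime" equals
`Σ_{j=r}^{k(k-1)/2} (-1)^{j-r} C(j-1,r-1) Σ_{E ⊆ V^{(2)}, |E|=j} δ_G(n)`. -/
theorem stmt_7 (k r : ℕ) (hk : 2 ≤ k) (hr : 1 ≤ r) (n : Fin k → ℕ) (hn : ∀ i, 0 < n i) :
    (if r ≤ (Finset.univ.filter fun q : Fin k × Fin k =>
          q.1 < q.2 ∧ Nat.gcd (n q.1) (n q.2) = 1).card then (1 : ℤ) else 0) =
    ∑ j ∈ Finset.Icc r (k * (k - 1) / 2), (-1 : ℤ) ^ (j - r) * ((j - 1).choose (r - 1)) *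
      ∑ E ∈ (⊤ : SimpleGraph (Fin k)).edgeFinset.powerset.filter (fun E => E.card = j),
        (if ∀ a b : Fin k, s(a, b) ∈ E → Nat.gcd (n a) (n b) = 1
          then (1 : ℤ) else 0) :=
  stmt_7_general k r hr n
end

section
/- Let f : ℕ^k → ℂ be a function of k variables (not necessarily multiplicative) such that Σ_{n_1,…,n_k ≥ 1} |(μ ∗ f)(n_1,…,n_k)| / (n_1 ⋯ n_k) < ∞. Then the mean value M(f) exists and M(f) = Σ_{n_1,…,n_k ≥ 1} (μ ∗ f)(n_1,…,n_k) / (n_1 ⋯ n_k). -/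
/-!
Write `g = μ ∗ f`. Möbius inversion gives `f = 1 ∗ g`, and counting the multiples of `d` in the
box `[1, x]` turns this into `Σ_{n ≤ x} f(n) = Σ_{d ≤ x} g(d) ∏ ⌊x_i / d_i⌋`. After dividing by
`x_1 ⋯ x_k`, the `d`-th term tends to `g(d) / (d_1 ⋯ d_k)` and is bounded in norm by
`|g(d)| / (d_1 ⋯ d_k)`, which is summable by hypothesis; dominated convergence for series
(Tannery's theorem) then identifies the limit.
-/

open Filter Finset Topology ArithmeticFunction
open scoped ArithmeticFunction.Moebius

theorem Nat.sum_divisors_moebius {R : Type*} [Ring R] (n : ℕ) :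
    ∑ d ∈ n.divisors, (μ d : R) = if n = 1 then 1 else 0 := by
  have h := congr($(coe_zeta_mul_coe_moebius (R := R)) n)
  simpa only [coe_zeta_mul_apply, intCoe_apply, one_apply] using h

theorem Nat.div_mem_divisors_of_mem_divisors {n d e : ℕ} (he : e ∈ d.divisors)
    (hd : d ∈ n.divisors) : d / e ∈ n.divisors :=
  Nat.mem_divisors.2 ⟨(Nat.div_dvd_of_dvd (Nat.dvd_of_mem_divisors he)).trans
    (Nat.dvd_of_mem_divisors hd), Nat.ne_zero_of_mem_divisors hd⟩

theorem Nat.mem_divisors_div_div {n d e : ℕ} (he : e ∈ d.divisors) (hd : d ∈ n.divisors) :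
    e ∈ (n / (d / e)).divisors := by
  obtain ⟨⟨a, rfl⟩, -⟩ := Nat.mem_divisors.1 he
  obtain ⟨⟨b, rfl⟩, hn⟩ := Nat.mem_divisors.1 hd
  simp only [ne_eq, mul_eq_zero, not_or] at hn
  obtain ⟨⟨he, ha⟩, hb⟩ := hn
  rw [Nat.mul_div_cancel_left a (Nat.pos_of_ne_zero he), mul_right_comm,
    Nat.mul_div_cancel _ (Nat.pos_of_ne_zero ha)]
  simp [*]

theorem Nat.mul_mem_divisors_of_mem_divisors_div {n m e : ℕ} (hm : m ∈ n.divisors)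
    (he : e ∈ (n / m).divisors) : m * e ∈ n.divisors :=
  Nat.mem_divisors.2 ⟨(Nat.dvd_div_iff_mul_dvd (Nat.dvd_of_mem_divisors hm)).1
    (Nat.dvd_of_mem_divisors he), Nat.ne_zero_of_mem_divisors hm⟩

theorem tendsto_natCast_div_div_natCast (m : ℕ) (hm : m ≠ 0) :
    Tendsto (fun x : ℕ => ((x / m : ℕ) : ℂ) / x) atTop (𝓝 (m : ℂ)⁻¹) := by
  have hx : Tendsto (fun x : ℕ => (x : ℝ) / m) atTop atTop :=
    tendsto_natCast_atTop_atTop.atTop_div_const (by positivity)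
  have h := (tendsto_nat_floor_div_atTop.comp hx).mul_const (m : ℝ)⁻¹
  rw [one_mul, ← tendsto_ofReal_iff, Complex.ofReal_inv, Complex.ofReal_natCast] at h
  refine h.congr' ((eventually_ne_atTop 0).mono fun x hx => ?_)
  simp only [Function.comp_apply, Nat.floor_div_eq_div]
  push_cast
  field_simp

theorem norm_natCast_div_div_natCast_le (x d : ℕ) : ‖((x / d : ℕ) : ℂ) / x‖ ≤ (d : ℝ)⁻¹ := by
  rw [norm_div, Complex.norm_natCast, Complex.norm_natCast]
  rcases eq_or_ne x 0 with rfl | hx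
  · simp
  calc ((x / d : ℕ) : ℝ) / x ≤ (x / d : ℝ) / x := by gcongr; exact Nat.cast_div_le
    _ = (d : ℝ)⁻¹ := by field_simp

theorem tendsto_prod_natCast_div_div_natCast {ι : Type*} [Fintype ι] {d : ι → ℕ}
    (hd : ∀ i, d i ≠ 0) :
    Tendsto (fun x : ι → ℕ => ∏ i, ((x i / d i : ℕ) : ℂ) / x i) atTop (𝓝 (∏ i, (d i : ℂ))⁻¹) := by
  rw [← prod_inv_distrib]
  refine tendsto_finsetProd _ fun i _ => (tendsto_natCast_div_div_natCast _ (hd i)).comp ?_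
  exact tendsto_atTop.2 fun b => (eventually_ge_atTop fun _ => b).mono fun x hx => hx i

theorem norm_prod_natCast_div_div_natCast_le {ι : Type*} [Fintype ι] (x d : ι → ℕ) :
    ‖∏ i, ((x i / d i : ℕ) : ℂ) / x i‖ ≤ (∏ i, (d i : ℝ))⁻¹ := by
  rw [norm_prod, ← prod_inv_distrib]
  exact prod_le_prod (fun _ _ => norm_nonneg _) fun i _ => norm_natCast_div_div_natCast_le _ _

section

variable {ι : Type*} [Fintype ι] [DecidableEq ι]

def piDivisors (n : ι → ℕ) : Finset (ι → ℕ) :=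
  Fintype.piFinset fun i => (n i).divisors

theorem mem_piDivisors {n d : ι → ℕ} : d ∈ piDivisors n ↔ ∀ i, d i ∈ (n i).divisors :=
  Fintype.mem_piFinset

def moebiusConv {R : Type*} [CommRing R] (f : (ι → ℕ) → R) (n : ι → ℕ) : R :=
  ∑ d ∈ piDivisors n, (∏ i, (μ (d i) : R)) * f (n / d)

theorem sum_piDivisors_prod_moebius {R : Type*} [CommRing R] (n : ι → ℕ) :
    ∑ e ∈ piDivisors n, ∏ i, (μ (e i) : R) = if n = 1 then 1 else 0 := by
  rw [piDivisors, ← prod_univ_sum (fun i => (n i).divisors) fun _ d => (μ d : R)]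
  simp only [Nat.sum_divisors_moebius, Fintype.prod_boole, funext_iff, Pi.one_apply]

theorem sum_piDivisors_sum_piDivisors_div {M : Type*} [AddCommMonoid M] (n : ι → ℕ)
    (F : (ι → ℕ) → (ι → ℕ) → M) :
    ∑ d ∈ piDivisors n, ∑ e ∈ piDivisors d, F e (d / e) =
      ∑ m ∈ piDivisors n, ∑ e ∈ piDivisors (n / m), F e m := by
  rw [sum_sigma', sum_sigma']
  refine sum_nbij' (fun p => ⟨p.1 / p.2, p.2⟩) (fun q => ⟨q.1 * q.2, q.2⟩) ?_ ?_ ?_ ?_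
    fun _ _ => rfl
  all_goals rintro ⟨d, e⟩ h; simp only [mem_sigma, mem_piDivisors] at h ⊢
  · exact ⟨fun i => Nat.div_mem_divisors_of_mem_divisors (h.2 i) (h.1 i),
      fun i => Nat.mem_divisors_div_div (h.2 i) (h.1 i)⟩
  · exact ⟨fun i => Nat.mul_mem_divisors_of_mem_divisors_div (h.1 i) (h.2 i),
      fun i => Nat.mem_divisors.2 ⟨dvd_mul_left _ _,
        mul_ne_zero (Nat.pos_of_mem_divisors (h.1 i)).ne' (Nat.pos_of_mem_divisors (h.2 i)).ne'⟩⟩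
  · exact Sigma.ext (funext fun i => Nat.div_mul_cancel (Nat.dvd_of_mem_divisors (h.2 i))) HEq.rfl
  · exact Sigma.ext (funext fun i => Nat.mul_div_cancel _ (Nat.pos_of_mem_divisors (h.2 i))) HEq.rfl

theorem sum_piDivisors_moebiusConv {R : Type*} [CommRing R] (f : (ι → ℕ) → R) {n : ι → ℕ}
    (hn : ∀ i, n i ≠ 0) : ∑ d ∈ piDivisors n, moebiusConv f d = f n := by
  simp only [moebiusConv]
  rw [sum_piDivisors_sum_piDivisors_div n fun e m => (∏ i, (μ (e i) : R)) * f m]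
  simp only [← sum_mul, sum_piDivisors_prod_moebius, ite_mul, one_mul, zero_mul]
  have hmem : n ∈ piDivisors n := mem_piDivisors.2 fun i => Nat.mem_divisors_self _ (hn i)
  rw [sum_eq_single_of_mem n hmem fun m hm hmn => if_neg fun h => hmn ?_]
  · simp [funext_iff, Nat.div_self, Nat.pos_of_ne_zero, hn]
  · exact funext fun i => Nat.eq_of_dvd_of_div_eq_one
      (Nat.dvd_of_mem_divisors (mem_piDivisors.1 hm i)) (congrFun h i)

theorem card_filter_dvd_Icc_one (x d : ι → ℕ) :
    #{n ∈ Icc 1 x | ∀ i, d i ∣ n i} = ∏ i, x i / d i := by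
  have h : {n ∈ Icc 1 x | ∀ i, d i ∣ n i} =
      Fintype.piFinset fun i => {m ∈ Ioc 0 (x i) | d i ∣ m} := by
    ext n
    simp only [mem_filter, Fintype.mem_piFinset, Pi.Icc_eq]
    exact forall_and.symm
  simp [h, Fintype.card_piFinset, Nat.Ioc_filter_dvd_card_eq_div]

theorem sum_Icc_sum_piDivisors {M : Type*} [AddCommMonoid M] (g : (ι → ℕ) → M) (x : ι → ℕ) :
    ∑ n ∈ Icc 1 x, ∑ d ∈ piDivisors n, g d = ∑ d ∈ Icc 1 x, (∏ i, x i / d i) • g d := by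
  rw [sum_comm' (t' := Icc 1 x) (s' := fun d => {n ∈ Icc 1 x | ∀ i, d i ∣ n i})]
  · refine sum_congr rfl fun d _ => ?_
    rw [sum_const, card_filter_dvd_Icc_one]
  · intro n d
    simp only [mem_Icc, mem_filter, mem_piDivisors, Pi.le_def, Pi.one_apply, Nat.mem_divisors,
      ← forall_and]
    refine forall_congr' fun i => ?_
    constructor
    · rintro ⟨⟨hn, hnx⟩, hdn, -⟩
      exact ⟨⟨⟨hn, hnx⟩, hdn⟩, Nat.pos_of_dvd_of_pos hdn hn, (Nat.le_of_dvd hn hdn).trans hnx⟩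
    · rintro ⟨⟨⟨hn, hnx⟩, hdn⟩, -⟩
      exact ⟨⟨hn, hnx⟩, hdn, Nat.one_le_iff_ne_zero.1 hn⟩

theorem sum_Icc_div_prod_eq_tsum (f : (ι → ℕ) → ℂ) (x : ι → ℕ) :
    (∑ n ∈ Icc 1 x, f n) / ∏ i, (x i : ℂ) =
      ∑' d : ι → ℕ+, moebiusConv f (fun i => d i) * ∏ i, ((x i / d i : ℕ) : ℂ) / x i := by
  set F : (ι → ℕ) → ℂ := fun m => moebiusConv f m * ∏ i, ((x i / m i : ℕ) : ℂ) / x i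
  -- Since `x / 0 = 0` in `ℕ`, `F` also vanishes where some `m i = 0`, i.e. off the image of `ℕ+`.
  have hF : ∀ m ∉ Icc 1 x, F m = 0 := by
    intro m hm
    simp only [mem_Icc, Pi.le_def, Pi.one_apply, ← forall_and, not_forall] at hm
    obtain ⟨i, hi⟩ := hm
    refine mul_eq_zero_of_right _ (prod_eq_zero (mem_univ i) ?_)
    rw [Nat.div_eq_zero_iff.2 (by omega), Nat.cast_zero, zero_div]
  have hsupp : Function.support F ⊆ Set.range fun (d : ι → ℕ+) i => (d i : ℕ) := by
    intro m hm
    have hm' := mem_Icc.1 (not_imp_comm.1 (hF m) hm)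
    exact ⟨fun i => ⟨m i, hm'.1 i⟩, rfl⟩
  calc (∑ n ∈ Icc 1 x, f n) / ∏ i, (x i : ℂ)
      = (∑ n ∈ Icc 1 x, ∑ d ∈ piDivisors n, moebiusConv f d) / ∏ i, (x i : ℂ) := by
        congr 1
        refine sum_congr rfl fun n hn => (sum_piDivisors_moebiusConv f fun i => ?_).symm
        exact Nat.one_le_iff_ne_zero.1 ((mem_Icc.1 hn).1 i)
    _ = ∑ m ∈ Icc 1 x, F m := by
        rw [sum_Icc_sum_piDivisors, sum_div]
        refine sum_congr rfl fun m _ => ?_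
        rw [nsmul_eq_mul, Nat.cast_prod, mul_comm, mul_div_assoc, ← prod_div_distrib]
    _ = ∑' m, F m := (tsum_eq_sum hF).symm
    _ = ∑' d : ι → ℕ+, F fun i => d i := (PNat.coe_injective.comp_left.tsum_eq hsupp).symm

end

/-- Generalized Wintner theorem (Ushiroya): if
`Σ_n |(μ ∗ f)(n_1,…,n_k)| / (n_1⋯n_k) < ∞`, then the mean value `M(f)` exists
(the limit being taken independently in each variable) and equals
`Σ_n (μ ∗ f)(n_1,…,n_k) / (n_1⋯n_k)`. -/
theorem stmt_11 (k : ℕ) (f : (Fin k → ℕ) → ℂ)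
    (h : Summable fun n : Fin k → ℕ+ =>
      ‖∑ d ∈ Fintype.piFinset fun i => ((n i : ℕ)).divisors,
          (∏ i, (ArithmeticFunction.moebius (d i) : ℂ)) *
            f (fun i => (n i : ℕ) / d i)‖ /
        ∏ i, ((n i : ℕ) : ℝ)) :
    Tendsto (fun x : Fin k → ℕ =>
        (∑ n ∈ Fintype.piFinset fun i => Finset.Icc 1 (x i), f n) /
          ∏ i, ((x i : ℂ)))
      atTop
      (nhds (∑' n : Fin k → ℕ+,
        (∑ d ∈ Fintype.piFinset fun i => ((n i : ℕ)).divisors,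
            (∏ i, (ArithmeticFunction.moebius (d i) : ℂ)) *
              f (fun i => (n i : ℕ) / d i)) /
          ∏ i, ((n i : ℕ) : ℂ))) := by
  have hlim (d : Fin k → ℕ+) : Tendsto
      (fun x : Fin k → ℕ => moebiusConv f (fun i => d i) * ∏ i, ((x i / d i : ℕ) : ℂ) / x i)
      atTop (𝓝 (moebiusConv f (fun i => d i) / ∏ i, ((d i : ℕ) : ℂ))) :=
    (tendsto_prod_natCast_div_div_natCast fun i => (d i).ne_zero).const_mul _
  have hbound (x : Fin k → ℕ) (d : Fin k → ℕ+) :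
      ‖moebiusConv f (fun i => d i) * ∏ i, ((x i / d i : ℕ) : ℂ) / x i‖ ≤
        ‖moebiusConv f (fun i => d i)‖ / ∏ i, ((d i : ℕ) : ℝ) := by
    rw [norm_mul, div_eq_mul_inv]
    exact mul_le_mul_of_nonneg_left (norm_prod_natCast_div_div_natCast_le _ _) (norm_nonneg _)
  exact (tendsto_tsum_of_dominated_convergence h hlim (.of_forall hbound)).congr fun x =>
    (sum_Icc_div_prod_eq_tsum f x).symm
end

section
/- Let k ≥ 2 and let G = (V,E) be a simple graph with vertex set V = {1,…,k}. The function μ ∗ δ_G is multiplicative, and for every prime p and nonnegative integers ν_1,…,ν_k the following hold: (i) (μ ∗ δ_G)(p^{ν_1},…,p^{ν_k}) = 0 whenever ν_i ≥ 2 for some i; (ii) (μ ∗ δ_G)(p^{ν_1},…,p^{ν_k}) = 0 whenever ν_1,…,ν_k ∈ {0,1} and ν_1+⋯+ν_k = 1; (iii) if ν_1,…,ν_k ∈ {0,1} with exactly two indices i_0 ≠ i_0' satisfying ν_{i_0} = ν_{i_0'} = 1, then (μ ∗ δ_G)(p^{ν_1},…,p^{ν_k}) = −1 if {i_0, i_0'}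 ∈ E and 0 if {i_0, i_0'} ∉ E. -/
/-- The coprimality indicator `δ_G` of the graph `G`. -/
def coprimeInd {k : ℕ} (G : SimpleGraph (Fin k)) [DecidableRel G.Adj]
    (n : Fin k → ℕ) : ℤ :=
  if ∀ i j, G.Adj i j → Nat.gcd (n i) (n j) = 1 then 1 else 0

/-- The Dirichlet convolution `μ ∗ δ_G` of the `k`-variable Möbius function
with the coprimality indicator `δ_G`. -/
def muDeltaG {k : ℕ} (G : SimpleGraph (Fin k)) [DecidableRel G.Adj]
    (n : Fin k → ℕ) : ℤ :=
  ∑ d ∈ Fintype.piFinset fun i => (n i).divisors,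
    (∏ i, ArithmeticFunction.moebius (d i)) * coprimeInd G (fun i => n i / d i)

open Finset ArithmeticFunction

lemma gcd_pow_pow_eq_one_iff {p : ℕ} (hp : p.Prime) (a b : ℕ) :
    Nat.gcd (p ^ a) (p ^ b) = 1 ↔ a = 0 ∨ b = 0 := by
  constructor
  · intro h
    by_contra hc
    push_neg at hc
    have hd : p ∣ 1 := h ▸ Nat.dvd_gcd (dvd_pow_self p hc.1) (dvd_pow_self p hc.2)
    exact hp.one_lt.ne' (Nat.eq_one_of_dvd_one hd)
  · rintro (rfl | rfl) <;> simp [Nat.gcd_comm]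

lemma coprimeInd_pow_eq {k : ℕ} (G : SimpleGraph (Fin k)) [DecidableRel G.Adj]
    {p : ℕ} (hp : p.Prime) (W : Fin k → ℕ) :
    coprimeInd G (fun i => p ^ W i) =
      if ∀ i j, G.Adj i j → W i = 0 ∨ W j = 0 then 1 else 0 := by
  unfold coprimeInd
  refine if_congr ?_ rfl rfl
  exact forall_congr' fun i => forall_congr' fun j => imp_congr_right fun _ =>
    gcd_pow_pow_eq_one_iff hp _ _

lemma muDeltaG_prime_pow {k : ℕ} (G : SimpleGraph (Fin k)) [DecidableRel G.Adj]
    {p : ℕ} (hp : p.Prime) (ν : Fin k → ℕ) :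
    muDeltaG G (fun i => p ^ ν i) =
      ∑ e ∈ Fintype.piFinset fun i => Finset.range (ν i + 1),
        (∏ i, (ArithmeticFunction.moebius (p ^ e i) : ℤ)) *
          coprimeInd G (fun i => p ^ (ν i - e i)) := by
  unfold muDeltaG
  refine Finset.sum_nbij' (fun d => fun i => Nat.log p (d i))
    (fun e => fun i => p ^ e i) ?_ ?_ ?_ ?_ ?_
  · intro d hd
    rw [Fintype.mem_piFinset] at hd ⊢
    intro i
    obtain ⟨j, hj, hdd⟩ := (Nat.mem_divisors_prime_pow hp _).mp (hd i)
    show Nat.log p (d i) ∈ Finset.range (ν i + 1)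
    rw [hdd, Nat.log_pow hp.one_lt, Finset.mem_range]
    omega
  · intro e he
    rw [Fintype.mem_piFinset] at he ⊢
    intro i
    have := Finset.mem_range.mp (he i)
    rw [Nat.mem_divisors]
    exact ⟨pow_dvd_pow p (by omega), pow_ne_zero _ hp.pos.ne'⟩
  · intro d hd
    rw [Fintype.mem_piFinset] at hd
    funext i
    show p ^ Nat.log p (d i) = d i
    obtain ⟨j, hj, hdd⟩ := (Nat.mem_divisors_prime_pow hp _).mp (hd i)
    rw [hdd, Nat.log_pow hp.one_lt]
  · intro e he
    funext i
    show Nat.log p (p ^ e i) = e i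
    rw [Nat.log_pow hp.one_lt]
  · intro d hd
    rw [Fintype.mem_piFinset] at hd
    have hrep : ∀ i, d i = p ^ Nat.log p (d i) := by
      intro i
      obtain ⟨j, hj, hdd⟩ := (Nat.mem_divisors_prime_pow hp _).mp (hd i)
      rw [hdd, Nat.log_pow hp.one_lt]
    have hle : ∀ i, Nat.log p (d i) ≤ ν i := by
      intro i
      obtain ⟨j, hj, hdd⟩ := (Nat.mem_divisors_prime_pow hp _).mp (hd i)
      rw [hdd, Nat.log_pow hp.one_lt]; exact hj
    congr 1
    · exact Finset.prod_congr rfl fun i _ => by rw [← hrep i]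
    · congr 1
      funext i
      rw [hrep i, Nat.pow_div (hle i) hp.pos]

lemma muDeltaG_flip_zero {k : ℕ} (G : SimpleGraph (Fin k)) [DecidableRel G.Adj]
    {p : ℕ} (hp : p.Prime) (ν : Fin k → ℕ) (i₀ : Fin k) (h1 : 1 ≤ ν i₀)
    (hδ : ∀ e : Fin k → ℕ,
      coprimeInd G (fun i => p ^ (ν i - Function.update e i₀ 0 i)) =
      coprimeInd G (fun i => p ^ (ν i - Function.update e i₀ 1 i))) :
    muDeltaG G (fun i => p ^ ν i) = 0 := by
  classical
  rw [muDeltaG_prime_pow G hp]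
  set F : (Fin k → ℕ) → ℤ := fun e =>
    (∏ i, (ArithmeticFunction.moebius (p ^ e i) : ℤ)) *
      coprimeInd G (fun i => p ^ (ν i - e i)) with hF
  have hprod : ∀ (e : Fin k → ℕ) (c : ℕ),
      (∏ i, (ArithmeticFunction.moebius (p ^ Function.update e i₀ c i) : ℤ))
      = (ArithmeticFunction.moebius (p ^ c) : ℤ) *
        ∏ i ∈ Finset.univ.erase i₀, (ArithmeticFunction.moebius (p ^ e i) : ℤ) := by
    intro e c
    rw [← Finset.mul_prod_erase Finset.univ _ (Finset.mem_univ i₀)]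
    rw [Function.update_self]
    congr 1
    refine Finset.prod_congr rfl fun i hi => ?_
    rw [Function.update_of_ne (Finset.mem_erase.mp hi).1]
  have key0 : ∀ e : Fin k → ℕ, e i₀ = 0 → F e + F (Function.update e i₀ 1) = 0 := by
    intro e h
    have hupd : Function.update e i₀ 0 = e := by
      rw [← h]; exact Function.update_eq_self _ _
    have hδe := hδ e
    rw [hupd] at hδe
    have he1 : (∏ i, (ArithmeticFunction.moebius (p ^ e i) : ℤ))
        = ∏ i ∈ Finset.univ.erase i₀, (ArithmeticFunction.moebius (p ^ e i) : ℤ) := by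
      rw [← hupd, hprod e 0, hupd, pow_zero, ArithmeticFunction.moebius_apply_one]
      push_cast; ring
    simp only [hF]
    rw [he1, hprod e 1, pow_one, ArithmeticFunction.moebius_apply_prime hp, ← hδe]
    push_cast
    ring
  have hFzero : ∀ e : Fin k → ℕ, 2 ≤ e i₀ → F e = 0 := by
    intro e he
    simp only [hF]
    have : (ArithmeticFunction.moebius (p ^ e i₀) : ℤ) = 0 := by
      rw [ArithmeticFunction.moebius_apply_prime_pow hp (by omega)]
      simp [show e i₀ ≠ 1 by omega]
    rw [Finset.prod_eq_zero (Finset.mem_univ i₀) this, zero_mul]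
  set g : (Fin k → ℕ) → (Fin k → ℕ) := fun e =>
    if e i₀ = 0 then Function.update e i₀ 1
    else if e i₀ = 1 then Function.update e i₀ 0 else e with hg
  have hmem : ∀ e ∈ Fintype.piFinset fun i => Finset.range (ν i + 1),
      ∀ c, c ≤ ν i₀ → Function.update e i₀ c ∈ Fintype.piFinset fun i => Finset.range (ν i + 1) := by
    intro e he c hc
    rw [Fintype.mem_piFinset] at he ⊢
    intro i
    rw [Function.update_apply]
    split
    · rename_i hh
      subst hh
      exact Finset.mem_range.mpr (by omega)
    · exact he i
  refine Finset.sum_involution (fun e _ => g e) ?_ ?_ ?_ ?_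
  · intro e he
    beta_reduce
    show F e + F (g e) = 0
    rcases Nat.lt_or_ge (e i₀) 2 with h2 | h2
    · interval_cases h : e i₀
      · have hge : g e = Function.update e i₀ 1 := by rw [hg]; simp [h]
        rw [hge]
        exact key0 e h
      · have hge : g e = Function.update e i₀ 0 := by rw [hg]; simp [h]
        have h0 : Function.update e i₀ 0 i₀ = 0 := Function.update_self _ _ _
        have := key0 (Function.update e i₀ 0) h0
        rw [Function.update_idem] at this
        have hupd : Function.update e i₀ 1 = e := by
          rw [← h]; exact Function.update_eq_self _ _
        rw [hupd] at this
        rw [hge]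
        linarith
    · have hge : g e = e := by
        rw [hg]; simp [show e i₀ ≠ 0 by omega, show e i₀ ≠ 1 by omega]
      rw [hge, hFzero e h2]
      norm_num
  · intro e he hne
    beta_reduce
    have hne' : F e ≠ 0 := hne
    have h2 : e i₀ < 2 := by
      by_contra hc
      exact hne' (hFzero e (by omega))
    intro heq
    have heq' : g e = e := heq
    interval_cases h : e i₀
    · have : g e i₀ = 1 := by rw [hg]; simp [h]
      rw [heq', h] at this; omega
    · have : g e i₀ = 0 := by rw [hg]; simp [h]
      rw [heq', h] at this; omega
  · intro e he
    beta_reduce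
    show g e ∈ _
    rcases Nat.lt_or_ge (e i₀) 2 with h2 | h2
    · interval_cases h : e i₀
      · have hge : g e = Function.update e i₀ 1 := by rw [hg]; simp [h]
        rw [hge]; exact hmem e he 1 h1
      · have hge : g e = Function.update e i₀ 0 := by rw [hg]; simp [h]
        rw [hge]; exact hmem e he 0 (by omega)
    · have hge : g e = e := by
        rw [hg]; simp [show e i₀ ≠ 0 by omega, show e i₀ ≠ 1 by omega]
      rw [hge]; exact he
  · intro e he
    beta_reduce
    show g (g e) = e
    rcases Nat.lt_or_ge (e i₀) 2 with h2 | h2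
    · interval_cases h : e i₀
      · have hge : g e = Function.update e i₀ 1 := by rw [hg]; simp [h]
        rw [hge, hg]
        simp only [Function.update_self]
        norm_num
        omega
      · have hge : g e = Function.update e i₀ 0 := by rw [hg]; simp [h]
        rw [hge, hg]
        simp only [Function.update_self]
        norm_num
        omega
    · have hge : g e = e := by
        rw [hg]; simp [show e i₀ ≠ 0 by omega, show e i₀ ≠ 1 by omega]
      rw [hge, hge]

lemma coprimeInd_pow_congr {k : ℕ} (G : SimpleGraph (Fin k)) [DecidableRel G.Adj]
    {p : ℕ} (hp : p.Prime) {a b : Fin k → ℕ} (h : ∀ i, a i = 0 ↔ b i = 0) :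
    coprimeInd G (fun i => p ^ a i) = coprimeInd G (fun i => p ^ b i) := by
  rw [coprimeInd_pow_eq G hp, coprimeInd_pow_eq G hp]
  refine if_congr ?_ rfl rfl
  exact forall_congr' fun i => forall_congr' fun j => imp_congr_right fun _ =>
    or_congr (h i) (h j)

lemma muDeltaG_case1 {k : ℕ} (G : SimpleGraph (Fin k)) [DecidableRel G.Adj]
    {p : ℕ} (hp : p.Prime) (ν : Fin k → ℕ) (i : Fin k) (hi : 2 ≤ ν i) :
    muDeltaG G (fun i => p ^ ν i) = 0 := by
  refine muDeltaG_flip_zero G hp ν i (by omega) fun e => ?_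
  refine coprimeInd_pow_congr G hp fun j => ?_
  rcases eq_or_ne j i with rfl | hj
  · simp only [Function.update_self]
    omega
  · rw [Function.update_of_ne hj, Function.update_of_ne hj]

lemma muDeltaG_case2 {k : ℕ} (G : SimpleGraph (Fin k)) [DecidableRel G.Adj]
    {p : ℕ} (hp : p.Prime) (ν : Fin k → ℕ) (i₀ : Fin k) (h1 : ν i₀ = 1)
    (h0 : ∀ j, j ≠ i₀ → ν j = 0) :
    muDeltaG G (fun i => p ^ ν i) = 0 := by
  refine muDeltaG_flip_zero G hp ν i₀ (by omega) fun e => ?_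
  have hone : ∀ (u : Fin k → ℕ),
      coprimeInd G (fun i => p ^ (ν i - u i)) = 1 := by
    intro u
    rw [coprimeInd_pow_eq G hp, if_pos]
    intro a b hab
    beta_reduce
    have hne := G.ne_of_adj hab
    rcases eq_or_ne a i₀ with rfl | ha
    · right
      rw [h0 b (fun hh => hne hh.symm)]
      omega
    · left
      rw [h0 a ha]
      omega
  rw [hone, hone]

lemma muDeltaG_case3 {k : ℕ} (G : SimpleGraph (Fin k)) [DecidableRel G.Adj]
    {p : ℕ} (hp : p.Prime) (ν : Fin k → ℕ) (i₀ i₀' : Fin k) (hne : i₀ ≠ i₀')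
    (h1 : ν i₀ = 1) (h1' : ν i₀' = 1) (h0 : ∀ i, i ≠ i₀ → i ≠ i₀' → ν i = 0) :
    muDeltaG G (fun i => p ^ ν i) = if G.Adj i₀ i₀' then -1 else 0 := by
  classical
  rw [muDeltaG_prime_pow G hp]
  obtain ⟨E, hEi₀, hEi₀', hEo⟩ : ∃ E : ℕ → ℕ → (Fin k → ℕ),
      (∀ c c', E c c' i₀ = c) ∧ (∀ c c', E c c' i₀' = c') ∧
      (∀ c c' i, i ≠ i₀ → i ≠ i₀' → E c c' i = 0) := by
    refine ⟨fun c c' i => if i = i₀ then c else if i = i₀' then c' else 0,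
      fun c c' => by simp, fun c c' => by simp [Ne.symm hne], fun c c' i hi hi' => by simp [hi, hi']⟩
  have step : (∑ e ∈ Fintype.piFinset fun i => Finset.range (ν i + 1),
      (∏ i, (ArithmeticFunction.moebius (p ^ e i) : ℤ)) *
        coprimeInd G (fun i => p ^ (ν i - e i)))
      = ∑ x ∈ Finset.range 2 ×ˢ Finset.range 2,
      (∏ i, (ArithmeticFunction.moebius (p ^ E x.1 x.2 i) : ℤ)) *
        coprimeInd G (fun i => p ^ (ν i - E x.1 x.2 i)) := by
    refine Finset.sum_nbij' (fun e => (e i₀, e i₀')) (fun x => E x.1 x.2) ?_ ?_ ?_ ?_ ?_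
    · intro e he
      beta_reduce
      rw [Fintype.mem_piFinset] at he
      rw [Finset.mem_product]
      constructor
      · have := Finset.mem_range.mp (he i₀); rw [h1] at this
        exact Finset.mem_range.mpr (by omega)
      · have := Finset.mem_range.mp (he i₀'); rw [h1'] at this
        exact Finset.mem_range.mpr (by omega)
    · intro x hx
      beta_reduce
      rw [Finset.mem_product] at hx
      rw [Fintype.mem_piFinset]
      intro i
      show E x.1 x.2 i ∈ Finset.range (ν i + 1)
      rcases eq_or_ne i i₀ with rfl | hi
      · rw [hEi₀, h1]; exact hx.1
      rcases eq_or_ne i i₀' with rfl | hi'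
      · rw [hEi₀', h1']; exact hx.2
      · rw [hEo _ _ _ hi hi']
        exact Finset.mem_range.mpr (by omega)
    · intro e he
      rw [Fintype.mem_piFinset] at he
      funext i
      show E (e i₀) (e i₀') i = e i
      rcases eq_or_ne i i₀ with rfl | hi
      · rw [hEi₀]
      rcases eq_or_ne i i₀' with rfl | hi'
      · rw [hEi₀']
      · rw [hEo _ _ _ hi hi']
        have := Finset.mem_range.mp (he i)
        rw [h0 i hi hi'] at this
        omega
    · intro x hx
      show (E x.1 x.2 i₀, E x.1 x.2 i₀') = x
      rw [hEi₀, hEi₀']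
    · intro e he
      rw [Fintype.mem_piFinset] at he
      have hee : E (e i₀) (e i₀') = e := by
        funext i
        rcases eq_or_ne i i₀ with rfl | hi
        · rw [hEi₀]
        rcases eq_or_ne i i₀' with rfl | hi'
        · rw [hEi₀']
        · rw [hEo _ _ _ hi hi']
          have := Finset.mem_range.mp (he i)
          rw [h0 i hi hi'] at this
          omega
      rw [hee]
  rw [step]
  -- expand the four terms
  have hprod : ∀ c c', (∏ i, (ArithmeticFunction.moebius (p ^ E c c' i) : ℤ))
      = (ArithmeticFunction.moebius (p ^ c) : ℤ) * ArithmeticFunction.moebius (p ^ c') := by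
    intro c c'
    rw [← Finset.prod_subset (Finset.subset_univ ({i₀, i₀'} : Finset (Fin k)))
      (fun x _ hx => ?_), Finset.prod_pair hne, hEi₀, hEi₀']
    rw [Finset.mem_insert, Finset.mem_singleton] at hx
    push_neg at hx
    rw [hEo _ _ _ hx.1 hx.2, pow_zero, ArithmeticFunction.moebius_apply_one]
  have hδ00 : coprimeInd G (fun i => p ^ (ν i - E 0 0 i)) =
      if G.Adj i₀ i₀' then 0 else 1 := by
    rw [coprimeInd_pow_eq G hp]
    by_cases hA : G.Adj i₀ i₀'
    · have hnc : ¬ ∀ a b, G.Adj a b → ν a - E 0 0 a = 0 ∨ ν b - E 0 0 b = 0 := by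
        intro hc
        rcases hc i₀ i₀' hA with h | h
        · have hx := hEi₀ (0:ℕ) (0:ℕ)
          clear * - hx h h1
          omega
        · have hx := hEi₀' (0:ℕ) (0:ℕ)
          clear * - hx h h1'
          omega
      rw [if_pos hA, if_neg hnc]
    · have hcond : ∀ a b, G.Adj a b → ν a - E 0 0 a = 0 ∨ ν b - E 0 0 b = 0 := by
        intro a b hab
        have hab' := G.ne_of_adj hab
        rcases eq_or_ne a i₀ with rfl | ha
        · right
          rcases eq_or_ne b i₀' with rfl | hb
          · exact absurd hab hA
          · have hx := h0 b (fun hh => hab' hh.symm) hb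
            clear * - hx
            omega
        rcases eq_or_ne a i₀' with rfl | ha'
        · right
          rcases eq_or_ne b i₀ with rfl | hb
          · exact absurd hab.symm hA
          · have hx := h0 b hb (fun hh => hab' hh.symm)
            clear * - hx
            omega
        · left
          have hx := h0 a ha ha'
          clear * - hx
          omega
      rw [if_neg hA, if_pos hcond]
  have hδone : ∀ c c', (∀ i, ν i - E c c' i = 0 ∨ (i = i₀ ∨ i = i₀') ∧ True) →
      True := fun _ _ _ => trivial
  have hδ10 : coprimeInd G (fun i => p ^ (ν i - E 1 0 i)) = 1 := by
    rw [coprimeInd_pow_eq G hp]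
    refine if_pos ?_
    intro a b hab
    have hab' := G.ne_of_adj hab
    rcases eq_or_ne a i₀' with rfl | ha
    · right
      rcases eq_or_ne b i₀ with rfl | hb
      · rw [hEi₀, h1]
      · rw [hEo _ _ _ hb (fun hh => hab' hh.symm), h0 b hb (fun hh => hab' hh.symm)]
    · left
      rcases eq_or_ne a i₀ with rfl | ha'
      · rw [hEi₀, h1]
      · rw [hEo _ _ _ ha' ha, h0 a ha' ha]
  have hδ01 : coprimeInd G (fun i => p ^ (ν i - E 0 1 i)) = 1 := by
    rw [coprimeInd_pow_eq G hp]
    refine if_pos ?_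
    intro a b hab
    have hab' := G.ne_of_adj hab
    rcases eq_or_ne a i₀ with rfl | ha
    · right
      rcases eq_or_ne b i₀' with rfl | hb
      · rw [hEi₀', h1']
      · rw [hEo _ _ _ (fun hh => hab' hh.symm) hb, h0 b (fun hh => hab' hh.symm) hb]
    · left
      rcases eq_or_ne a i₀' with rfl | ha'
      · rw [hEi₀', h1']
      · rw [hEo _ _ _ ha ha', h0 a ha ha']
  have hδ11 : coprimeInd G (fun i => p ^ (ν i - E 1 1 i)) = 1 := by
    rw [coprimeInd_pow_eq G hp]
    refine if_pos ?_
    intro a b hab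
    left
    rcases eq_or_ne a i₀ with rfl | ha
    · rw [hEi₀, h1]
    rcases eq_or_ne a i₀' with rfl | ha'
    · rw [hEi₀', h1']
    · rw [hEo _ _ _ ha ha', h0 a ha ha']
  rw [show (Finset.range 2 ×ˢ Finset.range 2 : Finset (ℕ × ℕ)) =
    {(0,0), (0,1), (1,0), (1,1)} by decide]
  rw [Finset.sum_insert (by decide), Finset.sum_insert (by decide),
    Finset.sum_insert (by decide), Finset.sum_singleton]
  simp only [hprod]
  rw [hδ00, hδ10, hδ01, hδ11]
  rw [pow_zero, pow_one, ArithmeticFunction.moebius_apply_one,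
    ArithmeticFunction.moebius_apply_prime hp]
  by_cases hA : G.Adj i₀ i₀' <;> simp [hA]

lemma coprimeInd_mul {k : ℕ} (G : SimpleGraph (Fin k)) [DecidableRel G.Adj]
    {x y : Fin k → ℕ} (hxy : ∀ i j, Nat.Coprime (x i) (y j)) :
    coprimeInd G (fun i => x i * y i) = coprimeInd G x * coprimeInd G y := by
  unfold coprimeInd
  have hiff : (∀ i j, G.Adj i j → Nat.gcd (x i * y i) (x j * y j) = 1) ↔
      (∀ i j, G.Adj i j → Nat.gcd (x i) (x j) = 1) ∧
      (∀ i j, G.Adj i j → Nat.gcd (y i) (y j) = 1) := by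
    constructor
    · intro h
      constructor
      · intro i j hij
        have hh : Nat.Coprime (x i * y i) (x j * y j) := h i j hij
        exact (Nat.Coprime.coprime_dvd_left (dvd_mul_right _ _)
          hh).coprime_dvd_right (dvd_mul_right _ _)
      · intro i j hij
        have hh : Nat.Coprime (x i * y i) (x j * y j) := h i j hij
        exact (Nat.Coprime.coprime_dvd_left (dvd_mul_left _ _)
          hh).coprime_dvd_right (dvd_mul_left _ _)
    · rintro ⟨h1, h2⟩ i j hij
      have c1 : Nat.Coprime (x i) (x j * y j) :=
        Nat.Coprime.mul_right (h1 i j hij) (hxy i j)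
      have c2 : Nat.Coprime (y i) (x j * y j) :=
        Nat.Coprime.mul_right (hxy j i).symm (h2 i j hij)
      exact Nat.Coprime.mul c1 c2
  rw [if_congr hiff rfl rfl, ite_and]
  by_cases hx : ∀ i j, G.Adj i j → Nat.gcd (x i) (x j) = 1 <;>
    by_cases hy : ∀ i j, G.Adj i j → Nat.gcd (y i) (y j) = 1
  · simp [eq_true hx, eq_true hy]
  · simp [eq_true hx, eq_false hy]
  · simp [eq_false hx]
  · simp [eq_false hx]

theorem muDeltaG_mul {k : ℕ} (G : SimpleGraph (Fin k)) [DecidableRel G.Adj]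
    (m n : Fin k → ℕ) (hm : ∀ i, 0 < m i) (hn : ∀ i, 0 < n i)
    (hco : Nat.Coprime (∏ i, m i) (∏ i, n i)) :
    muDeltaG G (fun i => m i * n i) = muDeltaG G m * muDeltaG G n := by
  classical
  have hcop : ∀ i j, Nat.Coprime (m i) (n j) := fun i j =>
    Nat.Coprime.coprime_dvd_right (Finset.dvd_prod_of_mem _ (Finset.mem_univ j))
      (Nat.Coprime.coprime_dvd_left (Finset.dvd_prod_of_mem _ (Finset.mem_univ i)) hco)
  unfold muDeltaG
  rw [Finset.sum_mul_sum]
  rw [← Finset.sum_product']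
  refine Finset.sum_nbij' (fun d => (fun i => Nat.gcd (d i) (m i), fun i => Nat.gcd (d i) (n i)))
    (fun x => fun i => x.1 i * x.2 i) ?_ ?_ ?_ ?_ ?_
  · intro d hd
    rw [Fintype.mem_piFinset] at hd
    rw [Finset.mem_product]
    constructor
    · rw [Fintype.mem_piFinset]
      intro i
      exact Nat.mem_divisors.mpr ⟨Nat.gcd_dvd_right _ _, (hm i).ne'⟩
    · rw [Fintype.mem_piFinset]
      intro i
      exact Nat.mem_divisors.mpr ⟨Nat.gcd_dvd_right _ _, (hn i).ne'⟩
  · intro x hx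
    rw [Finset.mem_product, Fintype.mem_piFinset, Fintype.mem_piFinset] at hx
    rw [Fintype.mem_piFinset]
    intro i
    have h1 := Nat.mem_divisors.mp (hx.1 i)
    have h2 := Nat.mem_divisors.mp (hx.2 i)
    exact Nat.mem_divisors.mpr ⟨Nat.mul_dvd_mul h1.1 h2.1, mul_ne_zero h1.2 h2.2⟩
  · intro d hd
    rw [Fintype.mem_piFinset] at hd
    funext i
    show Nat.gcd (d i) (m i) * Nat.gcd (d i) (n i) = d i
    exact (Nat.gcd_mul_gcd_eq_iff_dvd_mul_of_coprime (hcop i i)).mpr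
      (Nat.mem_divisors.mp (hd i)).1
  · intro x hx
    rw [Finset.mem_product, Fintype.mem_piFinset, Fintype.mem_piFinset] at hx
    have hg1 : ∀ i, Nat.gcd (x.1 i * x.2 i) (m i) = x.1 i := by
      intro i
      have hd1 : x.1 i ∣ m i := (Nat.mem_divisors.mp (hx.1 i)).1
      have hd2 : x.2 i ∣ n i := (Nat.mem_divisors.mp (hx.2 i)).1
      have hcop2 : Nat.Coprime (x.2 i) (m i) :=
        Nat.Coprime.coprime_dvd_left hd2 (hcop i i).symm
      rw [Nat.Coprime.gcd_mul_right_cancel _ hcop2]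
      exact Nat.gcd_eq_left hd1
    have hg2 : ∀ i, Nat.gcd (x.1 i * x.2 i) (n i) = x.2 i := by
      intro i
      have hd1 : x.1 i ∣ m i := (Nat.mem_divisors.mp (hx.1 i)).1
      have hd2 : x.2 i ∣ n i := (Nat.mem_divisors.mp (hx.2 i)).1
      have hcop1 : Nat.Coprime (x.1 i) (n i) :=
        Nat.Coprime.coprime_dvd_left hd1 (hcop i i)
      rw [mul_comm, Nat.Coprime.gcd_mul_right_cancel _ hcop1]
      exact Nat.gcd_eq_left hd2
    show ((fun i => Nat.gcd (x.1 i * x.2 i) (m i)), (fun i => Nat.gcd (x.1 i * x.2 i) (n i))) = x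
    ext i
    · exact hg1 i
    · exact hg2 i
  · intro d hd
    rw [Fintype.mem_piFinset] at hd
    have ha : ∀ i, Nat.gcd (d i) (m i) ∣ m i := fun i => Nat.gcd_dvd_right _ _
    have hb : ∀ i, Nat.gcd (d i) (n i) ∣ n i := fun i => Nat.gcd_dvd_right _ _
    have hab : ∀ i, Nat.gcd (d i) (m i) * Nat.gcd (d i) (n i) = d i := fun i =>
      (Nat.gcd_mul_gcd_eq_iff_dvd_mul_of_coprime (hcop i i)).mpr
        (Nat.mem_divisors.mp (hd i)).1
    have hμ : (∏ i, (ArithmeticFunction.moebius (d i) : ℤ)) =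
        (∏ i, (ArithmeticFunction.moebius (Nat.gcd (d i) (m i)) : ℤ)) *
        ∏ i, (ArithmeticFunction.moebius (Nat.gcd (d i) (n i)) : ℤ) := by
      rw [← Finset.prod_mul_distrib]
      refine Finset.prod_congr rfl fun i _ => ?_
      conv_lhs => rw [← hab i]
      have : Nat.Coprime (Nat.gcd (d i) (m i)) (Nat.gcd (d i) (n i)) :=
        Nat.Coprime.coprime_dvd_left (ha i)
          (Nat.Coprime.coprime_dvd_right (hb i) (hcop i i))
      exact_mod_cast congrArg (Int.cast : ℤ → ℤ)
        (ArithmeticFunction.isMultiplicative_moebius.map_mul_of_coprime this)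
    have hdiv : (fun i => m i * n i / d i) =
        fun i => (m i / Nat.gcd (d i) (m i)) * (n i / Nat.gcd (d i) (n i)) := by
      funext i
      rw [Nat.div_mul_div_comm (ha i) (hb i), hab i]
    have hδ : coprimeInd G (fun i => m i * n i / d i) =
        coprimeInd G (fun i => m i / Nat.gcd (d i) (m i)) *
        coprimeInd G (fun i => n i / Nat.gcd (d i) (n i)) := by
      rw [hdiv]
      refine coprimeInd_mul G fun i j => ?_
      exact Nat.Coprime.coprime_dvd_right (Nat.div_dvd_of_dvd (hb j))
        (Nat.Coprime.coprime_dvd_left (Nat.div_dvd_of_dvd (ha i)) (hcop i j))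
    show (∏ i, (ArithmeticFunction.moebius (d i) : ℤ)) *
        coprimeInd G (fun i => m i * n i / d i) = _
    rw [hμ, hδ]
    ring

/-- Remark of the paper: `μ ∗ δ_G` is multiplicative, vanishes at prime powers
`(p^{ν_1},…,p^{ν_k})` when some `ν_i ≥ 2` or when `ν_1+⋯+ν_k = 1` with all
`ν_i ∈ {0,1}`, and when exactly two exponents equal `1` (at indices `i₀ ≠ i₀'`)
its value is `-1` if `{i₀,i₀'}` is an edge of `G` and `0` otherwise. -/
theorem stmt_13 (k : ℕ) (hk : 2 ≤ k) (G : SimpleGraph (Fin k)) [DecidableRel G.Adj] :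
    (∀ m n : Fin k → ℕ, (∀ i, 0 < m i) → (∀ i, 0 < n i) →
      Nat.Coprime (∏ i, m i) (∏ i, n i) →
      muDeltaG G (fun i => m i * n i) = muDeltaG G m * muDeltaG G n) ∧
    ∀ p : ℕ, p.Prime → ∀ ν : Fin k → ℕ,
      ((∃ i, 2 ≤ ν i) → muDeltaG G (fun i => p ^ ν i) = 0) ∧
      ((∀ i, ν i ≤ 1) → (∑ i, ν i) = 1 → muDeltaG G (fun i => p ^ ν i) = 0) ∧
      ((∀ i, ν i ≤ 1) → ∀ i₀ i₀' : Fin k, i₀ ≠ i₀' → ν i₀ = 1 → ν i₀' = 1 →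
        (∀ i, i ≠ i₀ → i ≠ i₀' → ν i = 0) →
        muDeltaG G (fun i => p ^ ν i) = if G.Adj i₀ i₀' then -1 else 0) := by
  refine ⟨fun m n hm hn hco => muDeltaG_mul G m n hm hn hco, fun p hp ν => ⟨?_, ?_, ?_⟩⟩
  · rintro ⟨i, hi⟩
    exact muDeltaG_case1 G hp ν i hi
  · intro hle hsum
    have hex : ∃ i₀, ν i₀ ≠ 0 := by
      by_contra h
      push_neg at h
      rw [Finset.sum_congr rfl fun i _ => h i, Finset.sum_const, smul_zero] at hsum
      omega
    obtain ⟨i₀, hi₀⟩ := hex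
    have h₁ : ν i₀ + ∑ j ∈ Finset.univ.erase i₀, ν j = 1 := by
      rw [Finset.add_sum_erase _ _ (Finset.mem_univ i₀)]
      exact hsum
    have hrest : ∑ j ∈ Finset.univ.erase i₀, ν j = 0 := by omega
    refine muDeltaG_case2 G hp ν i₀ (by omega) fun j hj => ?_
    exact (Finset.sum_eq_zero_iff).mp hrest j (Finset.mem_erase.mpr ⟨hj, Finset.mem_univ j⟩)
  · intro hle i₀ i₀' hne h1 h1' h0
    exact muDeltaG_case3 G hp ν i₀ i₀' hne h1 h1' h0
end
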